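/- arXiv:1508.06053 — 3 statements merged into one kernel-verified Lean document; each statement's English description precedes it below -/
import Mathlib

section
/- Let s : Ω → ℝⁿ \ {0} be a smooth section. Then the Christoffel symbols of the Levi-Civita connection of the pullback metric differ from the pulled-back Chern–Rund coefficients by a Cartan-torsion term: for all x ∈ Ω and all indices α, β, γ, (Γ^{s})^α_{βγ}(x) − Γ^α_{βγ}(x, s(x)) = C^α_{μγ}(x,s(x)) D_β s^μ + C^α_{μβ}(x,s(x)) D_γ s^μ − C_{μβγ}(x,s(x)) g^{αδ}(x,s(x)) D_δ s^μ. -/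
noncomputable section

/-- Partial derivative `∂f/∂x^μ` of a function on the base `ℝⁿ`. -/
def pd {n : ℕ} (f : (Fin n → ℝ) → ℝ) (μ : Fin n) (x : Fin n → ℝ) : ℝ :=
  fderiv ℝ f x (Pi.single μ 1)

/-- Partial derivative in the base (`x`) variable of a fiber-dependent function. -/
def pdx {n : ℕ} (f : (Fin n → ℝ) → (Fin n → ℝ) → ℝ) (μ : Fin n) (x y : Fin n → ℝ) : ℝ :=
  fderiv ℝ (fun x' => f x' y) x (Pi.single μ 1)

/-- Partial derivative in the fiber (`y`) variable of a fiber-dependent function. -/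
def pdy {n : ℕ} (f : (Fin n → ℝ) → (Fin n → ℝ) → ℝ) (μ : Fin n) (x y : Fin n → ℝ) : ℝ :=
  fderiv ℝ (f x) y (Pi.single μ 1)

/-- The Finsler metric `g_{μν}(x,y) = ∂²L/∂y^μ∂y^ν`. -/
def gmet {n : ℕ} (L : (Fin n → ℝ) → (Fin n → ℝ) → ℝ) (μ ν : Fin n) :
    (Fin n → ℝ) → (Fin n → ℝ) → ℝ :=
  pdy (pdy L ν) μ

/-- The Cartan torsion `C_{αβγ} = (1/2) ∂g_{βγ}/∂y^α`. -/
def cartan {n : ℕ} (L : (Fin n → ℝ) → (Fin n → ℝ) → ℝ) (α β γ : Fin n)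
    (x y : Fin n → ℝ) : ℝ :=
  (1 / 2) * pdy (gmet L β γ) α x y

/-- The mean Cartan torsion `I_γ = g^{αβ} C_{αβγ}`. -/
def meanCartan {n : ℕ} (L : (Fin n → ℝ) → (Fin n → ℝ) → ℝ)
    (ginv : Fin n → Fin n → (Fin n → ℝ) → (Fin n → ℝ) → ℝ) (γ : Fin n)
    (x y : Fin n → ℝ) : ℝ :=
  ∑ α, ∑ β, ginv α β x y * cartan L α β γ x y

/-- The spray coefficients `2G^α = g^{αδ}(y^γ ∂²L/∂x^γ∂y^δ − ∂L/∂x^δ)`. -/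
def spray {n : ℕ} (L : (Fin n → ℝ) → (Fin n → ℝ) → ℝ)
    (ginv : Fin n → Fin n → (Fin n → ℝ) → (Fin n → ℝ) → ℝ) (α : Fin n)
    (x y : Fin n → ℝ) : ℝ :=
  (1 / 2) * ∑ δ, ginv α δ x y * ((∑ γ, y γ * pdx (pdy L δ) γ x y) - pdx L δ x y)

/-- The nonlinear connection `N^α_μ = ∂G^α/∂y^μ`. -/
def nlc {n : ℕ} (L : (Fin n → ℝ) → (Fin n → ℝ) → ℝ)
    (ginv : Fin n → Fin n → (Fin n → ℝ) → (Fin n → ℝ) → ℝ) (α μ : Fin n)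
    (x y : Fin n → ℝ) : ℝ :=
  pdy (spray L ginv α) μ x y

/-- The horizontal derivative `δf/δx^μ = ∂f/∂x^μ − N^ν_μ ∂f/∂y^ν`. -/
def dhor {n : ℕ} (L : (Fin n → ℝ) → (Fin n → ℝ) → ℝ)
    (ginv : Fin n → Fin n → (Fin n → ℝ) → (Fin n → ℝ) → ℝ)
    (f : (Fin n → ℝ) → (Fin n → ℝ) → ℝ) (μ : Fin n) (x y : Fin n → ℝ) : ℝ :=
  pdx f μ x y - ∑ ν, nlc L ginv ν μ x y * pdy f ν x y

/-- The Chern–Rund horizontal connection coefficients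
`Γ^α_{βγ} = (1/2) g^{ασ}(δg_{σγ}/δx^β + δg_{σβ}/δx^γ − δg_{βγ}/δx^σ)`. -/
def chr {n : ℕ} (L : (Fin n → ℝ) → (Fin n → ℝ) → ℝ)
    (ginv : Fin n → Fin n → (Fin n → ℝ) → (Fin n → ℝ) → ℝ) (α β γ : Fin n)
    (x y : Fin n → ℝ) : ℝ :=
  (1 / 2) * ∑ σ, ginv α σ x y *
    (dhor L ginv (gmet L σ γ) β x y + dhor L ginv (gmet L σ β) γ x y
      - dhor L ginv (gmet L β γ) σ x y)

/-- The covariant derivative of a section: `D_μ s^α = ∂s^α/∂x^μ + N^α_μ(x,s(x))`. -/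
def Dsec {n : ℕ} (L : (Fin n → ℝ) → (Fin n → ℝ) → ℝ)
    (ginv : Fin n → Fin n → (Fin n → ℝ) → (Fin n → ℝ) → ℝ)
    (s : (Fin n → ℝ) → (Fin n → ℝ)) (μ α : Fin n) (x : Fin n → ℝ) : ℝ :=
  pd (fun x' => s x' α) μ x + nlc L ginv α μ x (s x)

/-- The Levi-Civita Christoffel symbols of the pullback metric `(s*g)_{αβ}(x) = g_{αβ}(x,s(x))`
(whose inverse is `g^{ασ}(x,s(x))`). -/
def chrPull {n : ℕ} (L : (Fin n → ℝ) → (Fin n → ℝ) → ℝ)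
    (ginv : Fin n → Fin n → (Fin n → ℝ) → (Fin n → ℝ) → ℝ)
    (s : (Fin n → ℝ) → (Fin n → ℝ)) (α β γ : Fin n) (x : Fin n → ℝ) : ℝ :=
  (1 / 2) * ∑ σ, ginv α σ x (s x) *
    (pd (fun x' => gmet L σ γ x' (s x')) β x + pd (fun x' => gmet L σ β x' (s x')) γ x
      - pd (fun x' => gmet L β γ x' (s x')) σ x)

/-- The Chern–Rund horizontal covariant derivative
`(∇^H_α Z)^β = δZ^β/δx^α + Γ^β_{μα} Z^μ` of a fiber-dependent vector field. -/
def hcov {n : ℕ} (L : (Fin n → ℝ) → (Fin n → ℝ) → ℝ)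
    (ginv : Fin n → Fin n → (Fin n → ℝ) → (Fin n → ℝ) → ℝ)
    (Z : (Fin n → ℝ) → (Fin n → ℝ) → (Fin n → ℝ)) (α β : Fin n) (x y : Fin n → ℝ) : ℝ :=
  dhor L ginv (fun x y => Z x y β) α x y + ∑ μ, chr L ginv β μ α x y * Z x y μ

section Aux

open ContinuousLinearMap

variable {n : ℕ}

private lemma clm_pi_expand (φ : (Fin n → ℝ) →L[ℝ] ℝ) (v : Fin n → ℝ) :
    φ v = ∑ μ, v μ * φ (Pi.single μ 1) := by
  have hv : v = ∑ μ, v μ • (Pi.single μ (1 : ℝ) : Fin n → ℝ) := by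
    funext j
    simp [Finset.sum_apply, Pi.single_apply]
  conv_lhs => rw [hv]
  rw [map_sum]
  simp [smul_eq_mul]

/-- `pdy` as a joint fderiv. -/
private lemma pdy_eq_joint {f : (Fin n → ℝ) → (Fin n → ℝ) → ℝ} {x y : Fin n → ℝ}
    (hG : DifferentiableAt ℝ (fun p : (Fin n → ℝ) × (Fin n → ℝ) => f p.1 p.2) (x, y))
    (ν : Fin n) :
    pdy f ν x y
      = fderiv ℝ (fun p : (Fin n → ℝ) × (Fin n → ℝ) => f p.1 p.2) (x, y)
          (0, Pi.single ν 1) := by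
  have h1 : HasFDerivAt (fun y' => f x y')
      ((fderiv ℝ (fun p : (Fin n → ℝ) × (Fin n → ℝ) => f p.1 p.2) (x, y)).comp
        (ContinuousLinearMap.inr ℝ _ _)) y :=
    hG.hasFDerivAt.comp y (hasFDerivAt_prodMk_right x y)
  have : pdy f ν x y = fderiv ℝ (fun y' => f x y') y (Pi.single ν 1) := rfl
  rw [this, h1.fderiv]
  simp

private lemma pdx_eq_joint {f : (Fin n → ℝ) → (Fin n → ℝ) → ℝ} {x y : Fin n → ℝ}
    (hG : DifferentiableAt ℝ (fun p : (Fin n → ℝ) × (Fin n → ℝ) => f p.1 p.2) (x, y))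
    (β : Fin n) :
    fderiv ℝ (fun x' => f x' y) x (Pi.single β 1)
      = fderiv ℝ (fun p : (Fin n → ℝ) × (Fin n → ℝ) => f p.1 p.2) (x, y)
          (Pi.single β 1, 0) := by
  have h1 : HasFDerivAt (fun x' => f x' y)
      ((fderiv ℝ (fun p : (Fin n → ℝ) × (Fin n → ℝ) => f p.1 p.2) (x, y)).comp
        (ContinuousLinearMap.inl ℝ _ _)) x :=
    by have := hG.hasFDerivAt.comp x (hasFDerivAt_prodMk_left (𝕜 := ℝ) x y); exact this
  rw [h1.fderiv]
  simp

private lemma contDiffOn_pdyJoint {U : Set ((Fin n → ℝ) × (Fin n → ℝ))} (hU : IsOpen U)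
    {f : (Fin n → ℝ) → (Fin n → ℝ) → ℝ}
    (hG : ContDiffOn ℝ (⊤ : ℕ∞) (fun p : (Fin n → ℝ) × (Fin n → ℝ) => f p.1 p.2) U) (ν : Fin n) :
    ContDiffOn ℝ (⊤ : ℕ∞) (fun p : (Fin n → ℝ) × (Fin n → ℝ) => pdy f ν p.1 p.2) U := by
  have hsm : ContDiffOn ℝ (⊤ : ℕ∞)
      (fun p : (Fin n → ℝ) × (Fin n → ℝ) =>
        fderiv ℝ (fun q : (Fin n → ℝ) × (Fin n → ℝ) => f q.1 q.2) p (0, Pi.single ν 1)) U :=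
    (hG.fderiv_of_isOpen hU (by simp)).clm_apply contDiffOn_const
  refine hsm.congr fun p hp => ?_
  exact pdy_eq_joint ((hG.differentiableOn (by simp)).differentiableAt (hU.mem_nhds hp)) ν

end Aux

section Aux2
open Topology
variable {n : ℕ}

/-- Symmetry of repeated `pdy` at points of an open set where the joint function is smooth. -/
private lemma pdy_pdy_symm {U : Set ((Fin n → ℝ) × (Fin n → ℝ))} (hU : IsOpen U)
    {f : (Fin n → ℝ) → (Fin n → ℝ) → ℝ}
    (hG : ContDiffOn ℝ (⊤ : ℕ∞) (fun p : (Fin n → ℝ) × (Fin n → ℝ) => f p.1 p.2) U)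
    {x y : Fin n → ℝ} (hp : (x, y) ∈ U) (μ σ : Fin n) :
    pdy (pdy f σ) μ x y = pdy (pdy f μ) σ x y := by
  classical
  set V : Set (Fin n → ℝ) := {y' | (x, y') ∈ U} with hVdef
  have hVopen : IsOpen V := hU.preimage (Continuous.prodMk_right x)
  have hyV : y ∈ V := hp
  have hg : ContDiffOn ℝ (⊤ : ℕ∞) (f x) V := by
    have : ContDiffOn ℝ (⊤ : ℕ∞) ((fun p : (Fin n → ℝ) × (Fin n → ℝ) => f p.1 p.2) ∘
        (fun y' => (x, y'))) V :=
      hG.comp ((contDiff_prodMk_right x).contDiffOn) (fun y' hy' => hy')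
    exact this
  have hg' : ContDiffOn ℝ (⊤ : ℕ∞) (fderiv ℝ (f x)) V := hg.fderiv_of_isOpen hVopen (by simp)
  have hev : ∀ᶠ z in 𝓝 y, HasFDerivAt (f x) (fderiv ℝ (f x) z) z := by
    filter_upwards [hVopen.mem_nhds hyV] with z hz
    exact ((hg.differentiableOn (by simp)).differentiableAt (hVopen.mem_nhds hz)).hasFDerivAt
  have hx2 : HasFDerivAt (fderiv ℝ (f x)) (fderiv ℝ (fderiv ℝ (f x)) y) y :=
    ((hg'.differentiableOn (by simp)).differentiableAt (hVopen.mem_nhds hyV)).hasFDerivAt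
  have hsymm := second_derivative_symmetric_of_eventually hev hx2
  have happ : ∀ v w : Fin n → ℝ,
      fderiv ℝ (fun z => fderiv ℝ (f x) z v) y w = fderiv ℝ (fderiv ℝ (f x)) y w v := by
    intro v w
    have h3 : HasFDerivAt (fun z => fderiv ℝ (f x) z v)
        ((fderiv ℝ (fderiv ℝ (f x)) y).flip v) y := by
      have := hx2.clm_apply (hasFDerivAt_const v y)
      simpa using this
    rw [h3.fderiv]; rfl
  show fderiv ℝ (fun z => fderiv ℝ (f x) z (Pi.single σ 1)) y (Pi.single μ 1)
      = fderiv ℝ (fun z => fderiv ℝ (f x) z (Pi.single μ 1)) y (Pi.single σ 1)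
  rw [happ, happ, hsymm]

/-- Chain rule for the pullback of a fiberwise function along a section. -/
private lemma pd_comp_section {U : Set ((Fin n → ℝ) × (Fin n → ℝ))} (hU : IsOpen U)
    {f : (Fin n → ℝ) → (Fin n → ℝ) → ℝ}
    (hG : ContDiffOn ℝ (⊤ : ℕ∞) (fun p : (Fin n → ℝ) × (Fin n → ℝ) => f p.1 p.2) U)
    {s : (Fin n → ℝ) → (Fin n → ℝ)} {x : Fin n → ℝ} (hs : DifferentiableAt ℝ s x)
    (hmem : (x, s x) ∈ U) (β : Fin n) :
    fderiv ℝ (fun x' => f x' (s x')) x (Pi.single β 1)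
      = fderiv ℝ (fun x' => f x' (s x)) x (Pi.single β 1)
        + ∑ μ, fderiv ℝ (fun x' => s x' μ) x (Pi.single β 1) * pdy f μ x (s x) := by
  classical
  set G := fun p : (Fin n → ℝ) × (Fin n → ℝ) => f p.1 p.2 with hGdef
  have hdiff : DifferentiableAt ℝ G (x, s x) :=
    (hG.differentiableOn (by simp)).differentiableAt (hU.mem_nhds hmem)
  have hinner : HasFDerivAt (fun x' => (x', s x'))
      ((ContinuousLinearMap.id ℝ (Fin n → ℝ)).prod (fderiv ℝ s x)) x :=
    (hasFDerivAt_id x).prodMk hs.hasFDerivAt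
  have htot : HasFDerivAt (fun x' => f x' (s x'))
      ((fderiv ℝ G (x, s x)).comp
        ((ContinuousLinearMap.id ℝ (Fin n → ℝ)).prod (fderiv ℝ s x))) x :=
    by have := hdiff.hasFDerivAt.comp x hinner; exact this
  rw [htot.fderiv]
  have hsplit : ((fderiv ℝ G (x, s x)).comp
        ((ContinuousLinearMap.id ℝ (Fin n → ℝ)).prod (fderiv ℝ s x))) (Pi.single β 1)
      = fderiv ℝ G (x, s x) (Pi.single β 1, 0)
        + fderiv ℝ G (x, s x) (0, fderiv ℝ s x (Pi.single β 1)) := by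
    rw [← map_add]
    simp
  rw [hsplit]
  congr 1
  · exact (pdx_eq_joint hdiff β).symm
  · -- second piece : expand the fiber vector in the basis
    set v := fderiv ℝ s x (Pi.single β 1) with hv
    have hφ : fderiv ℝ G (x, s x) (0, v)
        = ((fderiv ℝ G (x, s x)).comp (ContinuousLinearMap.inr ℝ _ _)) v := by simp
    rw [hφ, clm_pi_expand]
    refine Finset.sum_congr rfl fun μ _ => ?_
    congr 1
    · -- v μ = fderiv of component
      have hproj : HasFDerivAt (fun x' => s x' μ)
          ((ContinuousLinearMap.proj μ).comp (fderiv ℝ s x)) x :=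
        (ContinuousLinearMap.proj (R := ℝ) (φ := fun _ : Fin n => ℝ) μ).hasFDerivAt.comp x
          hs.hasFDerivAt
      rw [hproj.fderiv]; rfl
    · rw [pdy_eq_joint hdiff μ]; simp; rfl

end Aux2



/-- The Christoffel symbols of the Levi-Civita connection of the pullback
metric differ from the pulled-back Chern–Rund coefficients by a Cartan-torsion term:
`(Γ^s)^α_{βγ}(x) − Γ^α_{βγ}(x,s(x)) = C^α_{μγ} D_β s^μ + C^α_{μβ} D_γ s^μ − C_{μβγ} g^{αδ} D_δ s^μ`. -/
theorem pullback_leviCivita_sub_chernRund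
    {n : ℕ} (hn : 2 ≤ n) (Ω : Set (Fin n → ℝ)) (hΩopen : IsOpen Ω) (hΩconn : IsConnected Ω)
    (L : (Fin n → ℝ) → (Fin n → ℝ) → ℝ)
    (hL : ContDiffOn ℝ (⊤ : ℕ∞) (fun p : (Fin n → ℝ) × (Fin n → ℝ) => L p.1 p.2)
      (Ω ×ˢ {y : Fin n → ℝ | y ≠ 0}))
    (hhom : ∀ x ∈ Ω, ∀ y : Fin n → ℝ, y ≠ 0 → ∀ t : ℝ, 0 < t → L x (t • y) = t ^ 2 * L x y)
    (ginv : Fin n → Fin n → (Fin n → ℝ) → (Fin n → ℝ) → ℝ)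
    (hginv : ∀ x ∈ Ω, ∀ y : Fin n → ℝ, y ≠ 0 → ∀ μ ν : Fin n,
      (∑ σ, gmet L μ σ x y * ginv σ ν x y) = if μ = ν then (1 : ℝ) else 0)
    (s : (Fin n → ℝ) → (Fin n → ℝ)) (hs : ContDiffOn ℝ (⊤ : ℕ∞) s Ω) (hs0 : ∀ x ∈ Ω, s x ≠ 0)
    :
    ∀ x ∈ Ω, ∀ α β γ : Fin n,
      chrPull L ginv s α β γ x - chr L ginv α β γ x (s x) =
        (∑ μ, (∑ δ, ginv α δ x (s x) * cartan L δ μ γ x (s x)) * Dsec L ginv s β μ x)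
        + (∑ μ, (∑ δ, ginv α δ x (s x) * cartan L δ μ β x (s x)) * Dsec L ginv s γ μ x)
        - (∑ μ, ∑ δ, cartan L μ β γ x (s x) * ginv α δ x (s x) * Dsec L ginv s δ μ x) := by
  intro x hx α β γ
  classical
  set U : Set ((Fin n → ℝ) × (Fin n → ℝ)) := Ω ×ˢ {y : Fin n → ℝ | y ≠ 0} with hUdef
  have hUopen : IsOpen U := hΩopen.prod isOpen_ne
  have hpU : (x, s x) ∈ U := ⟨hx, hs0 x hx⟩
  have hG1 : ∀ c : Fin n,
      ContDiffOn ℝ (⊤ : ℕ∞) (fun p : (Fin n → ℝ) × (Fin n → ℝ) => pdy L c p.1 p.2) U :=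
    fun c => contDiffOn_pdyJoint hUopen hL c
  have hG2 : ∀ σ c : Fin n,
      ContDiffOn ℝ (⊤ : ℕ∞) (fun p : (Fin n → ℝ) × (Fin n → ℝ) => pdy (pdy L c) σ p.1 p.2) U :=
    fun σ c => contDiffOn_pdyJoint hUopen (hG1 c) σ
  have hsx : DifferentiableAt ℝ s x :=
    (hs.differentiableOn (by simp)).differentiableAt (hΩopen.mem_nhds hx)
  have hsym : ∀ a b c : Fin n,
      pdy (gmet L a c) b x (s x) = pdy (gmet L b c) a x (s x) :=
    fun a b c => pdy_pdy_symm hUopen (hG1 c) hpU b a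
  have key : ∀ σ' γ' β' : Fin n,
      pd (fun x' => gmet L σ' γ' x' (s x')) β' x - dhor L ginv (gmet L σ' γ') β' x (s x)
        = ∑ μ, Dsec L ginv s β' μ x * pdy (gmet L σ' γ') μ x (s x) := by
    intro σ' γ' β'
    have hch : pd (fun x' => gmet L σ' γ' x' (s x')) β' x
        = pdx (gmet L σ' γ') β' x (s x)
          + ∑ μ, pd (fun x' => s x' μ) β' x * pdy (gmet L σ' γ') μ x (s x) :=
      pd_comp_section hUopen (hG2 σ' γ') hsx hpU β'
    rw [hch]
    simp only [dhor, Dsec]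
    have e1 : ∑ μ, (pd (fun x' => s x' μ) β' x + nlc L ginv μ β' x (s x))
          * pdy (gmet L σ' γ') μ x (s x)
        = (∑ μ, pd (fun x' => s x' μ) β' x * pdy (gmet L σ' γ') μ x (s x))
          + ∑ μ, nlc L ginv μ β' x (s x) * pdy (gmet L σ' γ') μ x (s x) := by
      rw [← Finset.sum_add_distrib]
      exact Finset.sum_congr rfl fun μ _ => add_mul _ _ _
    rw [e1]
    ring
  have hbig : chrPull L ginv s α β γ x - chr L ginv α β γ x (s x)
      = (1 / 2) * ∑ σ, ginv α σ x (s x) *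
          ((∑ μ, Dsec L ginv s β μ x * pdy (gmet L σ γ) μ x (s x))
            + (∑ μ, Dsec L ginv s γ μ x * pdy (gmet L σ β) μ x (s x))
            - ∑ μ, Dsec L ginv s σ μ x * pdy (gmet L β γ) μ x (s x)) := by
    simp only [chrPull, chr]
    rw [← mul_sub, ← Finset.sum_sub_distrib]
    congr 1
    refine Finset.sum_congr rfl fun σ _ => ?_
    rw [← mul_sub]
    congr 1
    rw [← key σ γ β, ← key σ β γ, ← key β γ σ]
    ring
  rw [hbig]
  have t1 : (∑ μ, (∑ δ, ginv α δ x (s x) * cartan L δ μ γ x (s x)) * Dsec L ginv s β μ x)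
      = ∑ σ, ∑ μ, ginv α σ x (s x) * cartan L σ μ γ x (s x) * Dsec L ginv s β μ x := by
    rw [Finset.sum_comm]
    exact Finset.sum_congr rfl fun μ _ => by rw [Finset.sum_mul]
  have t2 : (∑ μ, (∑ δ, ginv α δ x (s x) * cartan L δ μ β x (s x)) * Dsec L ginv s γ μ x)
      = ∑ σ, ∑ μ, ginv α σ x (s x) * cartan L σ μ β x (s x) * Dsec L ginv s γ μ x := by
    rw [Finset.sum_comm]
    exact Finset.sum_congr rfl fun μ _ => by rw [Finset.sum_mul]
  have t3 : (∑ μ, ∑ δ, cartan L μ β γ x (s x) * ginv α δ x (s x) * Dsec L ginv s δ μ x)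
      = ∑ σ, ∑ μ, cartan L μ β γ x (s x) * ginv α σ x (s x) * Dsec L ginv s σ μ x :=
    Finset.sum_comm
  rw [t1, t2, t3, Finset.mul_sum, ← Finset.sum_add_distrib, ← Finset.sum_sub_distrib]
  refine Finset.sum_congr rfl fun σ _ => ?_
  rw [← Finset.sum_add_distrib, ← Finset.sum_sub_distrib, Finset.mul_sum, Finset.mul_sum,
    ← Finset.sum_add_distrib, ← Finset.sum_sub_distrib]
  refine Finset.sum_congr rfl fun μ _ => ?_
  simp only [cartan]
  rw [hsym μ σ γ, hsym μ σ β]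
  ring
end
end

section
/- Let s : Ω → ℝⁿ \ {0} be a smooth section. Then for all x ∈ Ω and every index β, the contracted Christoffel symbols of the Levi-Civita connection of the pullback metric satisfy (Γ^{s})^α_{αβ}(x) = Γ^α_{αβ}(x, s(x)) + I_μ(x, s(x)) D_β s^μ; equivalently, for every smooth vector field Y : Ω → ℝⁿ, the Levi-Civita divergence ∂_α Y^α + (Γ^{s})^α_{αβ} Y^β equals the pulled-back Chern–Rund divergence ∂_α Y^α + Γ^α_{αβ}(x,s(x)) Y^β plus I_μ(x,s(x)) Y^β D_β s^μ. -/
noncomputable section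

/- ### Auxiliary material for the proof -/

open ContinuousLinearMap in
private lemma fderiv_slice_fst' {n : ℕ} {F : (Fin n → ℝ) × (Fin n → ℝ) → ℝ}
    {x y : Fin n → ℝ} (hF : DifferentiableAt ℝ F (x, y)) (v : Fin n → ℝ) :
    fderiv ℝ (fun x' => F (x', y)) x v = fderiv ℝ F (x, y) (v, 0) := by
  have h : HasFDerivAt (fun x' => F (x', y))
      ((fderiv ℝ F (x, y)).comp (inl ℝ (Fin n → ℝ) (Fin n → ℝ))) x :=
    hF.hasFDerivAt.comp x (hasFDerivAt_prodMk_left x y)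
  rw [h.fderiv]; rfl

open ContinuousLinearMap in
private lemma fderiv_slice_snd' {n : ℕ} {F : (Fin n → ℝ) × (Fin n → ℝ) → ℝ}
    {x y : Fin n → ℝ} (hF : DifferentiableAt ℝ F (x, y)) (v : Fin n → ℝ) :
    fderiv ℝ (fun y' => F (x, y')) y v = fderiv ℝ F (x, y) (0, v) := by
  have h : HasFDerivAt (fun y' => F (x, y'))
      ((fderiv ℝ F (x, y)).comp (inr ℝ (Fin n → ℝ) (Fin n → ℝ))) y :=
    hF.hasFDerivAt.comp y (hasFDerivAt_prodMk_right x y)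
  rw [h.fderiv]; rfl

private lemma fderiv_clm_apply_const' {E' : Type*} [NormedAddCommGroup E'] [NormedSpace ℝ E']
    {G : E' → E' →L[ℝ] ℝ} {p : E'} (hG : DifferentiableAt ℝ G p) (v w : E') :
    fderiv ℝ (fun q => G q v) p w = fderiv ℝ G p w v := by
  have h := (hG.hasFDerivAt.clm_apply (hasFDerivAt_const v p)).fderiv
  rw [h]; simp

private lemma contDiffOn_fderiv_apply' {E' : Type*} [NormedAddCommGroup E'] [NormedSpace ℝ E']
    {F : E' → ℝ} {U : Set E'} (hF : ContDiffOn ℝ (⊤ : ℕ∞) F U) (hU : IsOpen U) (v : E') :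
    ContDiffOn ℝ (⊤ : ℕ∞) (fun q => fderiv ℝ F q v) U := by
  have h1 : ContDiffOn ℝ (⊤ : ℕ∞) (fderiv ℝ F) U := hF.fderiv_of_isOpen hU (by simp)
  exact h1.clm_apply contDiffOn_const

private lemma schwarz' {E' : Type*} [NormedAddCommGroup E'] [NormedSpace ℝ E']
    {F : E' → ℝ} {U : Set E'} (hF : ContDiffOn ℝ (⊤ : ℕ∞) F U) (hU : IsOpen U)
    {p : E'} (hp : p ∈ U) (v w : E') :
    fderiv ℝ (fun q => fderiv ℝ F q v) p w = fderiv ℝ (fun q => fderiv ℝ F q w) p v := by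
  have h1 : ContDiffOn ℝ (⊤ : ℕ∞) (fderiv ℝ F) U := hF.fderiv_of_isOpen hU (by simp)
  have hd : DifferentiableAt ℝ (fderiv ℝ F) p :=
    (h1.contDiffAt (hU.mem_nhds hp)).differentiableAt (by simp)
  rw [fderiv_clm_apply_const' hd v w, fderiv_clm_apply_const' hd w v]
  exact (hF.contDiffAt (hU.mem_nhds hp)).isSymmSndFDerivAt (by rw [minSmoothness_of_isRCLikeNormedField]; exact WithTop.coe_le_coe.2 (le_top : (2:ℕ∞) ≤ ⊤)) w v

/-- The uncurried Lagrangian. -/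
private def uncur {n : ℕ} (L : (Fin n → ℝ) → (Fin n → ℝ) → ℝ) :
    (Fin n → ℝ) × (Fin n → ℝ) → ℝ :=
  fun p => L p.1 p.2

/-- `D1 F γ = ∂F/∂y^γ` as a function on the product space. -/
private def D1 {n : ℕ} (F : (Fin n → ℝ) × (Fin n → ℝ) → ℝ) (γ : Fin n) :
    (Fin n → ℝ) × (Fin n → ℝ) → ℝ :=
  fun p => fderiv ℝ F p (0, Pi.single γ 1)

private lemma pdy_of_eqOn {n : ℕ} {U : Set ((Fin n → ℝ) × (Fin n → ℝ))} (hU : IsOpen U)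
    {f : (Fin n → ℝ) → (Fin n → ℝ) → ℝ} {G : (Fin n → ℝ) × (Fin n → ℝ) → ℝ}
    (h : ∀ q ∈ U, f q.1 q.2 = G q) {x y : Fin n → ℝ} (hq : (x, y) ∈ U)
    (hG : DifferentiableAt ℝ G (x, y)) (ν : Fin n) :
    pdy f ν x y = fderiv ℝ G (x, y) (0, Pi.single ν 1) := by
  have hev : (fun y' => f x y') =ᶠ[nhds y] (fun y' => G (x, y')) := by
    have hm : {y' | (x, y') ∈ U} ∈ nhds y :=
      (hU.preimage (continuous_const.prodMk continuous_id)).mem_nhds hq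
    filter_upwards [hm] with y' hy' using h (x, y') hy'
  show fderiv ℝ (fun y' => f x y') y (Pi.single ν 1) = _
  rw [hev.fderiv_eq, fderiv_slice_snd' hG]

private lemma pdx_of_eqOn {n : ℕ} {U : Set ((Fin n → ℝ) × (Fin n → ℝ))} (hU : IsOpen U)
    {f : (Fin n → ℝ) → (Fin n → ℝ) → ℝ} {G : (Fin n → ℝ) × (Fin n → ℝ) → ℝ}
    (h : ∀ q ∈ U, f q.1 q.2 = G q) {x y : Fin n → ℝ} (hq : (x, y) ∈ U)
    (hG : DifferentiableAt ℝ G (x, y)) (b : Fin n) :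
    pdx f b x y = fderiv ℝ G (x, y) (Pi.single b 1, 0) := by
  have hev : (fun x' => f x' y) =ᶠ[nhds x] (fun x' => G (x', y)) := by
    have hm : {x' | (x', y) ∈ U} ∈ nhds x :=
      (hU.preimage (continuous_id.prodMk continuous_const)).mem_nhds hq
    filter_upwards [hm] with x' hx' using h (x', y) hx'
  show fderiv ℝ (fun x' => f x' y) x (Pi.single b 1) = _
  rw [hev.fderiv_eq, fderiv_slice_fst' hG]

private lemma sum_single_eq {n : ℕ} (c : Fin n → ℝ) :
    ∑ ν, c ν • ((0 : Fin n → ℝ), (Pi.single ν 1 : Fin n → ℝ)) = ((0 : Fin n → ℝ), c) := by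
  apply Prod.ext
  · rw [Prod.fst_sum]; simp
  · rw [Prod.snd_sum]
    funext j
    rw [Finset.sum_apply]
    simp [Pi.single_apply]

open ContinuousLinearMap in
private lemma pd_section {n : ℕ} {U : Set ((Fin n → ℝ) × (Fin n → ℝ))} (hU : IsOpen U)
    {f : (Fin n → ℝ) → (Fin n → ℝ) → ℝ} {G : (Fin n → ℝ) × (Fin n → ℝ) → ℝ}
    (h : ∀ q ∈ U, f q.1 q.2 = G q) {s : (Fin n → ℝ) → (Fin n → ℝ)} {x : Fin n → ℝ}
    (hmem : ∀ᶠ x' in nhds x, (x', s x') ∈ U)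
    (hG : DifferentiableAt ℝ G (x, s x)) (hsd : DifferentiableAt ℝ s x) (b : Fin n) :
    pd (fun x' => f x' (s x')) b x =
      fderiv ℝ G (x, s x) (Pi.single b 1, 0)
        + ∑ ν, pd (fun x' => s x' ν) b x * fderiv ℝ G (x, s x) (0, Pi.single ν 1) := by
  have hev : (fun x' => f x' (s x')) =ᶠ[nhds x] fun x' => G (x', s x') := by
    filter_upwards [hmem] with x' hx' using h (x', s x') hx'
  have hφ : HasFDerivAt (fun x' => (x', s x'))
      ((ContinuousLinearMap.id ℝ (Fin n → ℝ)).prod (fderiv ℝ s x)) x :=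
    HasFDerivAt.prodMk (hasFDerivAt_id x) hsd.hasFDerivAt
  have h2 : HasFDerivAt (fun x' => G (x', s x'))
      ((fderiv ℝ G (x, s x)).comp
        ((ContinuousLinearMap.id ℝ (Fin n → ℝ)).prod (fderiv ℝ s x))) x :=
    hG.hasFDerivAt.comp x hφ
  have hv : ∀ ν, pd (fun x' => s x' ν) b x = fderiv ℝ s x (Pi.single b 1) ν := by
    intro ν
    have h3 : HasFDerivAt (fun x' => s x' ν)
        ((proj ν : ((Fin n → ℝ)) →L[ℝ] ℝ).comp (fderiv ℝ s x)) x :=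
      ((proj ν : (Fin n → ℝ) →L[ℝ] ℝ).hasFDerivAt).comp x hsd.hasFDerivAt
    show fderiv ℝ (fun x' => s x' ν) x (Pi.single b 1) = _
    rw [h3.fderiv]; rfl
  show fderiv ℝ (fun x' => f x' (s x')) x (Pi.single b 1) = _
  rw [hev.fderiv_eq, h2.fderiv]
  have hLHS : ((fderiv ℝ G (x, s x)).comp
      ((ContinuousLinearMap.id ℝ (Fin n → ℝ)).prod (fderiv ℝ s x))) (Pi.single b 1)
      = fderiv ℝ G (x, s x) (Pi.single b 1, fderiv ℝ s x (Pi.single b 1)) := rfl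
  rw [hLHS]
  have hsplit : ((Pi.single b 1 : Fin n → ℝ), fderiv ℝ s x (Pi.single b 1))
      = ((Pi.single b 1 : Fin n → ℝ), (0 : Fin n → ℝ))
        + ((0 : Fin n → ℝ), fderiv ℝ s x (Pi.single b 1)) := by
    simp
  rw [hsplit, map_add]
  congr 1
  calc fderiv ℝ G (x, s x) ((0 : Fin n → ℝ), fderiv ℝ s x (Pi.single b 1))
      = fderiv ℝ G (x, s x)
          (∑ ν, (fderiv ℝ s x (Pi.single b 1) ν) •
            ((0 : Fin n → ℝ), (Pi.single ν 1 : Fin n → ℝ))) := by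
        rw [sum_single_eq]
    _ = ∑ ν, fderiv ℝ G (x, s x)
          ((fderiv ℝ s x (Pi.single b 1) ν) • ((0 : Fin n → ℝ), (Pi.single ν 1 : Fin n → ℝ))) := by
        rw [map_sum]
    _ = ∑ ν, pd (fun x' => s x' ν) b x * fderiv ℝ G (x, s x) (0, Pi.single ν 1) := by
        refine Finset.sum_congr rfl fun ν _ => ?_
        rw [map_smul, smul_eq_mul, hv ν]

private lemma sum_swap3 {n : ℕ} (g : Fin n → Fin n → Fin n → ℝ) :
    ∑ a, ∑ b, ∑ c, g a b c = ∑ c, ∑ a, ∑ b, g a b c := by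
  calc ∑ a, ∑ b, ∑ c, g a b c = ∑ a, ∑ c, ∑ b, g a b c :=
        Finset.sum_congr rfl fun a _ => Finset.sum_comm
    _ = ∑ c, ∑ a, ∑ b, g a b c := Finset.sum_comm

private lemma sum_algebra {n : ℕ} (β : Fin n)
    (A : Fin n → Fin n → ℝ) (X T : Fin n → Fin n → Fin n → ℝ) (Nc d : Fin n → Fin n → ℝ)
    (hA : ∀ a b, A a b = A b a)
    (hT : ∀ a b c, T a b c = T a c b) :
    (∑ α, 1 / 2 * ∑ σ, A α σ *
        ((X σ β α + ∑ ν, d ν α * T σ β ν) + (X σ α β + ∑ ν, d ν β * T σ α ν)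
          - (X α β σ + ∑ ν, d ν σ * T α β ν))) =
      (∑ α, 1 / 2 * ∑ σ, A α σ *
        ((X σ β α - ∑ ν, Nc ν α * T σ β ν) + (X σ α β - ∑ ν, Nc ν β * T σ α ν)
          - (X α β σ - ∑ ν, Nc ν σ * T α β ν)))
      + ∑ μ, (∑ a, ∑ b, A a b * (1 / 2 * T b μ a)) * (d μ β + Nc μ β) := by
  have hsplit : ∀ (u w S : Fin n → ℝ),
      (∑ ν, (u ν + w ν) * S ν) = (∑ ν, u ν * S ν) + ∑ ν, w ν * S ν := by
    intro u w S; rw [← Finset.sum_add_distrib]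
    exact Finset.sum_congr rfl fun ν _ => by ring
  have e1 : (∑ α, 1 / 2 * ∑ σ, A α σ *
        ((X σ β α + ∑ ν, d ν α * T σ β ν) + (X σ α β + ∑ ν, d ν β * T σ α ν)
          - (X α β σ + ∑ ν, d ν σ * T α β ν)))
      - (∑ α, 1 / 2 * ∑ σ, A α σ *
        ((X σ β α - ∑ ν, Nc ν α * T σ β ν) + (X σ α β - ∑ ν, Nc ν β * T σ α ν)
          - (X α β σ - ∑ ν, Nc ν σ * T α β ν)))
      = 1 / 2 * ((∑ α, ∑ σ, A α σ * ∑ ν, (d ν α + Nc ν α) * T σ β ν)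
          + (∑ α, ∑ σ, A α σ * ∑ ν, (d ν β + Nc ν β) * T σ α ν)
          - (∑ α, ∑ σ, A α σ * ∑ ν, (d ν σ + Nc ν σ) * T α β ν)) := by
    rw [← Finset.sum_sub_distrib]
    have per : ∀ α, (1 / 2 * ∑ σ, A α σ *
        ((X σ β α + ∑ ν, d ν α * T σ β ν) + (X σ α β + ∑ ν, d ν β * T σ α ν)
          - (X α β σ + ∑ ν, d ν σ * T α β ν)))
        - (1 / 2 * ∑ σ, A α σ *
        ((X σ β α - ∑ ν, Nc ν α * T σ β ν) + (X σ α β - ∑ ν, Nc ν β * T σ α ν)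
          - (X α β σ - ∑ ν, Nc ν σ * T α β ν)))
        = 1 / 2 * ∑ σ, A α σ * ((∑ ν, (d ν α + Nc ν α) * T σ β ν)
            + (∑ ν, (d ν β + Nc ν β) * T σ α ν)
            - (∑ ν, (d ν σ + Nc ν σ) * T α β ν)) := by
      intro α
      rw [← mul_sub, ← Finset.sum_sub_distrib]
      congr 1
      refine Finset.sum_congr rfl fun σ _ => ?_
      rw [hsplit (fun ν => d ν α) (fun ν => Nc ν α) (fun ν => T σ β ν),
        hsplit (fun ν => d ν β) (fun ν => Nc ν β) (fun ν => T σ α ν),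
        hsplit (fun ν => d ν σ) (fun ν => Nc ν σ) (fun ν => T α β ν)]
      ring
    rw [Finset.sum_congr rfl fun α _ => per α, ← Finset.mul_sum]
    congr 1
    rw [← Finset.sum_add_distrib, ← Finset.sum_sub_distrib]
    refine Finset.sum_congr rfl fun α _ => ?_
    rw [← Finset.sum_add_distrib, ← Finset.sum_sub_distrib]
    exact Finset.sum_congr rfl fun σ _ => by ring
  have e2 : (∑ α, ∑ σ, A α σ * ∑ ν, (d ν α + Nc ν α) * T σ β ν)
      = ∑ α, ∑ σ, A α σ * ∑ ν, (d ν σ + Nc ν σ) * T α β ν := by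
    conv_rhs => rw [Finset.sum_comm]
    refine Finset.sum_congr rfl fun a _ => Finset.sum_congr rfl fun b _ => ?_
    rw [hA a b]
  have e3 : 1 / 2 * (∑ α, ∑ σ, A α σ * ∑ ν, (d ν β + Nc ν β) * T σ α ν)
      = ∑ μ, (∑ a, ∑ b, A a b * (1 / 2 * T b μ a)) * (d μ β + Nc μ β) := by
    have hS2 : (∑ α, ∑ σ, A α σ * ∑ ν, (d ν β + Nc ν β) * T σ α ν)
        = ∑ ν, (∑ a, ∑ b, A a b * T b ν a) * (d ν β + Nc ν β) := by
      calc (∑ α, ∑ σ, A α σ * ∑ ν, (d ν β + Nc ν β) * T σ α ν)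
          = ∑ α, ∑ σ, ∑ ν, A α σ * ((d ν β + Nc ν β) * T σ ν α) := by
            refine Finset.sum_congr rfl fun α _ => Finset.sum_congr rfl fun σ _ => ?_
            rw [Finset.mul_sum]
            exact Finset.sum_congr rfl fun ν _ => by rw [hT σ α ν]
        _ = ∑ ν, ∑ α, ∑ σ, A α σ * ((d ν β + Nc ν β) * T σ ν α) :=
            sum_swap3 _
        _ = ∑ ν, (∑ a, ∑ b, A a b * T b ν a) * (d ν β + Nc ν β) := by
            refine Finset.sum_congr rfl fun ν _ => ?_
            rw [Finset.sum_mul]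
            refine Finset.sum_congr rfl fun a _ => ?_
            rw [Finset.sum_mul]
            exact Finset.sum_congr rfl fun b _ => by ring
    rw [hS2, Finset.mul_sum]
    refine Finset.sum_congr rfl fun μ _ => ?_
    have h12 : (∑ a, ∑ b, A a b * (1 / 2 * T b μ a)) = 1 / 2 * ∑ a, ∑ b, A a b * T b μ a := by
      rw [Finset.mul_sum]
      refine Finset.sum_congr rfl fun a _ => ?_
      rw [Finset.mul_sum]
      exact Finset.sum_congr rfl fun b _ => by ring
    rw [h12]; ring
  linear_combination e1 + (1 / 2) * e2 + e3


/-- Contracted Christoffel symbols of the pullback metric: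
`(Γ^s)^α_{αβ}(x) = Γ^α_{αβ}(x,s(x)) + I_μ(x,s(x)) D_β s^μ`; equivalently, the Levi-Civita
divergence of any smooth vector field `Y` equals the pulled-back Chern–Rund divergence plus
`I_μ Y^β D_β s^μ`. -/
theorem pullback_divergence_eq_chernRund_divergence_add_meanCartan
    {n : ℕ} (hn : 2 ≤ n) (Ω : Set (Fin n → ℝ)) (hΩopen : IsOpen Ω) (hΩconn : IsConnected Ω)
    (L : (Fin n → ℝ) → (Fin n → ℝ) → ℝ)
    (hL : ContDiffOn ℝ (⊤ : ℕ∞) (fun p : (Fin n → ℝ) × (Fin n → ℝ) => L p.1 p.2)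
      (Ω ×ˢ {y : Fin n → ℝ | y ≠ 0}))
    (hhom : ∀ x ∈ Ω, ∀ y : Fin n → ℝ, y ≠ 0 → ∀ t : ℝ, 0 < t → L x (t • y) = t ^ 2 * L x y)
    (ginv : Fin n → Fin n → (Fin n → ℝ) → (Fin n → ℝ) → ℝ)
    (hginv : ∀ x ∈ Ω, ∀ y : Fin n → ℝ, y ≠ 0 → ∀ μ ν : Fin n,
      (∑ σ, gmet L μ σ x y * ginv σ ν x y) = if μ = ν then (1 : ℝ) else 0)
    (s : (Fin n → ℝ) → (Fin n → ℝ)) (hs : ContDiffOn ℝ (⊤ : ℕ∞) s Ω) (hs0 : ∀ x ∈ Ω, s x ≠ 0)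
    :
    (∀ x ∈ Ω, ∀ β : Fin n,
      (∑ α, chrPull L ginv s α α β x) =
        (∑ α, chr L ginv α α β x (s x))
          + ∑ μ, meanCartan L ginv μ x (s x) * Dsec L ginv s β μ x)
    ∧
    (∀ Y : (Fin n → ℝ) → (Fin n → ℝ), ContDiffOn ℝ (⊤ : ℕ∞) Y Ω → ∀ x ∈ Ω,
      ((∑ α, pd (fun x' => Y x' α) α x) + ∑ β, (∑ α, chrPull L ginv s α α β x) * Y x β) =
        ((∑ α, pd (fun x' => Y x' α) α x) + ∑ β, (∑ α, chr L ginv α α β x (s x)) * Y x β)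
          + ∑ β, ∑ μ, meanCartan L ginv μ x (s x) * Y x β * Dsec L ginv s β μ x) := by
  classical
  have hUopen : IsOpen (Ω ×ˢ {y : Fin n → ℝ | y ≠ 0}) := hΩopen.prod isOpen_ne
  have hLu : ContDiffOn ℝ (⊤ : ℕ∞) (uncur L) (Ω ×ˢ {y : Fin n → ℝ | y ≠ 0}) := hL
  have hmemU : ∀ x ∈ Ω, (x, s x) ∈ Ω ×ˢ {y : Fin n → ℝ | y ≠ 0} :=
    fun x hx => ⟨hx, hs0 x hx⟩
  have hF1 : ∀ γ, ContDiffOn ℝ (⊤ : ℕ∞) (D1 (uncur L) γ) (Ω ×ˢ {y : Fin n → ℝ | y ≠ 0}) :=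
    fun γ => contDiffOn_fderiv_apply' hLu hUopen _
  have hF2 : ∀ σ γ, ContDiffOn ℝ (⊤ : ℕ∞) (D1 (D1 (uncur L) γ) σ) (Ω ×ˢ {y : Fin n → ℝ | y ≠ 0}) :=
    fun σ γ => contDiffOn_fderiv_apply' (hF1 γ) hUopen _
  have hdFu : ∀ q ∈ Ω ×ˢ {y : Fin n → ℝ | y ≠ 0}, DifferentiableAt ℝ (uncur L) q :=
    fun q hq => (hLu.contDiffAt (hUopen.mem_nhds hq)).differentiableAt (by simp)
  have hdF1 : ∀ γ, ∀ q ∈ Ω ×ˢ {y : Fin n → ℝ | y ≠ 0}, DifferentiableAt ℝ (D1 (uncur L) γ) q :=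
    fun γ q hq => ((hF1 γ).contDiffAt (hUopen.mem_nhds hq)).differentiableAt (by simp)
  have hdF2 : ∀ σ γ, ∀ q ∈ Ω ×ˢ {y : Fin n → ℝ | y ≠ 0},
      DifferentiableAt ℝ (D1 (D1 (uncur L) γ) σ) q :=
    fun σ γ q hq => ((hF2 σ γ).contDiffAt (hUopen.mem_nhds hq)).differentiableAt (by simp)
  have hpdyL : ∀ γ : Fin n, ∀ q ∈ Ω ×ˢ {y : Fin n → ℝ | y ≠ 0},
      pdy L γ q.1 q.2 = D1 (uncur L) γ q :=
    fun γ q hq => fderiv_slice_snd' (hdFu q hq) _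
  have hgmet : ∀ σ γ : Fin n, ∀ q ∈ Ω ×ˢ {y : Fin n → ℝ | y ≠ 0},
      gmet L σ γ q.1 q.2 = D1 (D1 (uncur L) γ) σ q :=
    fun σ γ q hq => pdy_of_eqOn hUopen (fun q' hq' => hpdyL γ q' hq') hq (hdF1 γ q hq) σ
  have hF2symmU : ∀ q ∈ Ω ×ˢ {y : Fin n → ℝ | y ≠ 0}, ∀ σ γ : Fin n,
      D1 (D1 (uncur L) γ) σ q = D1 (D1 (uncur L) σ) γ q :=
    fun q hq σ γ => schwarz' hLu hUopen hq _ _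
  -- the main pointwise identity
  have main : ∀ x ∈ Ω, ∀ β : Fin n,
      (∑ α, chrPull L ginv s α α β x) =
        (∑ α, chr L ginv α α β x (s x))
          + ∑ μ, meanCartan L ginv μ x (s x) * Dsec L ginv s β μ x := by
    intro x hx β
    have hp : (x, s x) ∈ Ω ×ˢ {y : Fin n → ℝ | y ≠ 0} := hmemU x hx
    have hsd : DifferentiableAt ℝ s x :=
      (hs.contDiffAt (hΩopen.mem_nhds hx)).differentiableAt (by simp)
    have hmnhds : ∀ᶠ x' in nhds x, (x', s x') ∈ Ω ×ˢ {y : Fin n → ℝ | y ≠ 0} := by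
      filter_upwards [hΩopen.mem_nhds hx] with x' hx' using hmemU x' hx'
    have hpdy_g : ∀ σ γ ν : Fin n, pdy (gmet L σ γ) ν x (s x)
        = fderiv ℝ (D1 (D1 (uncur L) γ) σ) (x, s x) (0, Pi.single ν 1) :=
      fun σ γ ν => pdy_of_eqOn hUopen (fun q hq => hgmet σ γ q hq) hp (hdF2 σ γ _ hp) ν
    have hpdx_g : ∀ σ γ b : Fin n, pdx (gmet L σ γ) b x (s x)
        = fderiv ℝ (D1 (D1 (uncur L) γ) σ) (x, s x) (Pi.single b 1, 0) :=
      fun σ γ b => pdx_of_eqOn hUopen (fun q hq => hgmet σ γ q hq) hp (hdF2 σ γ _ hp) b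
    have hQ : ∀ σ γ b : Fin n, pd (fun x' => gmet L σ γ x' (s x')) b x
        = fderiv ℝ (D1 (D1 (uncur L) γ) σ) (x, s x) (Pi.single b 1, 0)
          + ∑ ν, pd (fun x' => s x' ν) b x
              * fderiv ℝ (D1 (D1 (uncur L) γ) σ) (x, s x) (0, Pi.single ν 1) :=
      fun σ γ b => pd_section hUopen (fun q hq => hgmet σ γ q hq) hmnhds (hdF2 σ γ _ hp) hsd b
    -- symmetries of the third fiber derivative
    have hT12 : ∀ σ γ ν : Fin n,
        fderiv ℝ (D1 (D1 (uncur L) γ) σ) (x, s x) (0, Pi.single ν 1)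
          = fderiv ℝ (D1 (D1 (uncur L) σ) γ) (x, s x) (0, Pi.single ν 1) := by
      intro σ γ ν
      have hev : D1 (D1 (uncur L) γ) σ =ᶠ[nhds (x, s x)] D1 (D1 (uncur L) σ) γ := by
        filter_upwards [hUopen.mem_nhds hp] with q hq using hF2symmU q hq σ γ
      rw [hev.fderiv_eq]
    have hT13 : ∀ σ γ ν : Fin n,
        fderiv ℝ (D1 (D1 (uncur L) γ) σ) (x, s x) (0, Pi.single ν 1)
          = fderiv ℝ (D1 (D1 (uncur L) γ) ν) (x, s x) (0, Pi.single σ 1) :=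
      fun σ γ ν => schwarz' (hF1 γ) hUopen hp _ _
    have hT23 : ∀ a b c : Fin n,
        fderiv ℝ (D1 (D1 (uncur L) b) a) (x, s x) (0, Pi.single c 1)
          = fderiv ℝ (D1 (D1 (uncur L) c) a) (x, s x) (0, Pi.single b 1) := by
      intro a b c
      rw [hT12 a b c, hT13 b a c, hT12 c a b]
    -- symmetry of the metric and of its inverse at the point
    have hgmetP : ∀ a b : Fin n, gmet L a b x (s x) = gmet L b a x (s x) := by
      intro a b
      have h1 : gmet L a b x (s x) = D1 (D1 (uncur L) b) a (x, s x) := hgmet a b _ hp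
      have h2 : gmet L b a x (s x) = D1 (D1 (uncur L) a) b (x, s x) := hgmet b a _ hp
      rw [h1, h2, hF2symmU _ hp a b]
    have hAsym : ∀ a b : Fin n, ginv a b x (s x) = ginv b a x (s x) := by
      have hGA : (Matrix.of fun μ ν => gmet L μ ν x (s x))
          * (Matrix.of fun μ ν => ginv μ ν x (s x)) = 1 := by
        ext μ ν
        rw [Matrix.mul_apply, Matrix.one_apply]
        simpa using hginv x hx (s x) (hs0 x hx) μ ν
      have hGT : Matrix.transpose (Matrix.of fun μ ν => gmet L μ ν x (s x))
          = (Matrix.of fun μ ν => gmet L μ ν x (s x)) := by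
        ext μ ν
        simpa [Matrix.transpose_apply] using hgmetP ν μ
      have h1 : (Matrix.of fun μ ν => gmet L μ ν x (s x))⁻¹
          = Matrix.of fun μ ν => ginv μ ν x (s x) := Matrix.inv_eq_right_inv hGA
      have h2 : Matrix.transpose (Matrix.of fun μ ν => ginv μ ν x (s x))
          = Matrix.of fun μ ν => ginv μ ν x (s x) := by
        rw [← h1, Matrix.transpose_nonsing_inv, hGT]
      intro a b
      have h3 : Matrix.transpose (Matrix.of fun μ ν => ginv μ ν x (s x)) b a
          = (Matrix.of fun μ ν => ginv μ ν x (s x)) b a := by rw [h2]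
      simpa [Matrix.transpose_apply] using h3
    simp only [chrPull, chr, dhor, meanCartan, cartan, Dsec, hQ, hpdx_g, hpdy_g]
    exact sum_algebra β (fun a b => ginv a b x (s x))
      (fun a b c => fderiv ℝ (D1 (D1 (uncur L) b) a) (x, s x) (Pi.single c 1, 0))
      (fun a b c => fderiv ℝ (D1 (D1 (uncur L) b) a) (x, s x) (0, Pi.single c 1))
      (fun a b => nlc L ginv a b x (s x))
      (fun a b => pd (fun x' => s x' a) b x)
      hAsym hT23
  refine ⟨main, ?_⟩
  intro Y _ x hx
  have h1 := main x hx
  have hrw : ∀ β' : Fin n, (∑ α, chrPull L ginv s α α β' x) * Y x β'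
      = (∑ α, chr L ginv α α β' x (s x)) * Y x β'
        + ∑ μ, meanCartan L ginv μ x (s x) * Y x β' * Dsec L ginv s β' μ x := by
    intro β'
    rw [h1 β', add_mul]
    congr 1
    rw [Finset.sum_mul]
    exact Finset.sum_congr rfl fun μ _ => by ring
  rw [Finset.sum_congr rfl fun β' _ => hrw β', Finset.sum_add_distrib]
  ring
end
end

section
/- Suppose the smooth section s : Ω → ℝⁿ \ {0} satisfies the support-evaluated Killing equation g_{δβ}(x,s(x)) D_γ s^β + g_{γβ}(x,s(x)) D_δ s^β + 2 (s^α D_α s^μ) C_{γδμ}(x,s(x)) = 0 for all x, γ, δ, and is normalized: g_{μν}(x,s(x)) s^μ(x) s^ν(x) = −1 for all x ∈ Ω. Then s is geodesic: s^α D_α s^β = 0 for all x ∈ Ω and every index β. -/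
noncomputable section

namespace FinslerAux

variable {n : ℕ} {U : Set ((Fin n → ℝ) × (Fin n → ℝ))}
variable {f : (Fin n → ℝ) → (Fin n → ℝ) → ℝ} {x y : Fin n → ℝ}

theorem diffAt_unc (hU : IsOpen U) (hf : ContDiffOn ℝ (⊤ : ℕ∞) (Function.uncurry f) U)
    (hp : (x, y) ∈ U) : DifferentiableAt ℝ (Function.uncurry f) (x, y) :=
  (hf.contDiffAt (hU.mem_nhds hp)).differentiableAt (by simp)

theorem pdx_eq (hU : IsOpen U) (hf : ContDiffOn ℝ (⊤ : ℕ∞) (Function.uncurry f) U)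
    (hp : (x, y) ∈ U) (μ : Fin n) :
    pdx f μ x y = fderiv ℝ (Function.uncurry f) (x, y) (Pi.single μ 1, 0) := by
  have h : DifferentiableAt ℝ (Function.uncurry f) (x, y) := diffAt_unc hU hf hp
  have h1 : HasFDerivAt (fun x' : Fin n → ℝ => (x', y))
      (ContinuousLinearMap.inl ℝ (Fin n → ℝ) (Fin n → ℝ)) x := hasFDerivAt_prodMk_left x y
  have h2 := (h.hasFDerivAt.comp x h1).fderiv
  show fderiv ℝ (fun x' => f x' y) x (Pi.single μ 1) = _
  rw [show (fun x' => f x' y)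
    = Function.uncurry f ∘ (fun x' : Fin n → ℝ => (x', y)) from rfl, h2]
  rfl

theorem pdy_eq_gen (hU : IsOpen U) (hf : ContDiffOn ℝ (⊤ : ℕ∞) (Function.uncurry f) U)
    (hp : (x, y) ∈ U) (v : Fin n → ℝ) :
    fderiv ℝ (f x) y v = fderiv ℝ (Function.uncurry f) (x, y) (0, v) := by
  have h : DifferentiableAt ℝ (Function.uncurry f) (x, y) := diffAt_unc hU hf hp
  have h1 : HasFDerivAt (fun y' : Fin n → ℝ => (x, y'))
      (ContinuousLinearMap.inr ℝ (Fin n → ℝ) (Fin n → ℝ)) y := hasFDerivAt_prodMk_right x y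
  have h2 := (h.hasFDerivAt.comp y h1).fderiv
  rw [show f x = Function.uncurry f ∘ (fun y' : Fin n → ℝ => (x, y')) from rfl, h2]
  rfl

theorem pdy_eq (hU : IsOpen U) (hf : ContDiffOn ℝ (⊤ : ℕ∞) (Function.uncurry f) U)
    (hp : (x, y) ∈ U) (μ : Fin n) :
    pdy f μ x y = fderiv ℝ (Function.uncurry f) (x, y) (0, Pi.single μ 1) :=
  pdy_eq_gen hU hf hp _

theorem diffAt_y (hU : IsOpen U) (hf : ContDiffOn ℝ (⊤ : ℕ∞) (Function.uncurry f) U)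
    (hp : (x, y) ∈ U) : DifferentiableAt ℝ (f x) y := by
  have h : DifferentiableAt ℝ (Function.uncurry f) (x, y) := diffAt_unc hU hf hp
  have h1 : HasFDerivAt (fun y' : Fin n → ℝ => (x, y'))
      (ContinuousLinearMap.inr ℝ (Fin n → ℝ) (Fin n → ℝ)) y := hasFDerivAt_prodMk_right x y
  exact (h.hasFDerivAt.comp y h1).differentiableAt

theorem diffAt_x (hU : IsOpen U) (hf : ContDiffOn ℝ (⊤ : ℕ∞) (Function.uncurry f) U)
    (hp : (x, y) ∈ U) : DifferentiableAt ℝ (fun x' => f x' y) x := by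
  have h : DifferentiableAt ℝ (Function.uncurry f) (x, y) := diffAt_unc hU hf hp
  have h1 : HasFDerivAt (fun x' : Fin n → ℝ => (x', y))
      (ContinuousLinearMap.inl ℝ (Fin n → ℝ) (Fin n → ℝ)) x := hasFDerivAt_prodMk_left x y
  exact (h.hasFDerivAt.comp x h1).differentiableAt

theorem sm_fderiv (hU : IsOpen U) (hf : ContDiffOn ℝ (⊤ : ℕ∞) (Function.uncurry f) U) :
    ContDiffOn ℝ (⊤ : ℕ∞) (fderiv ℝ (Function.uncurry f)) U :=
  hf.fderiv_of_isOpen hU (by simp)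

theorem sm_pdx (hU : IsOpen U) (hf : ContDiffOn ℝ (⊤ : ℕ∞) (Function.uncurry f) U) (μ : Fin n) :
    ContDiffOn ℝ (⊤ : ℕ∞) (Function.uncurry (pdx f μ)) U := by
  apply ContDiffOn.congr (((sm_fderiv hU hf).clm_apply contDiffOn_const))
  intro p hp
  have := pdx_eq (x := p.1) (y := p.2) hU hf (by simpa using hp) μ
  simpa [Function.uncurry] using this

theorem sm_pdy (hU : IsOpen U) (hf : ContDiffOn ℝ (⊤ : ℕ∞) (Function.uncurry f) U) (μ : Fin n) :
    ContDiffOn ℝ (⊤ : ℕ∞) (Function.uncurry (pdy f μ)) U := by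
  apply ContDiffOn.congr (((sm_fderiv hU hf).clm_apply contDiffOn_const))
  intro p hp
  have := pdy_eq (x := p.1) (y := p.2) hU hf (by simpa using hp) μ
  simpa [Function.uncurry] using this

theorem hasFDerivAt_fderiv_apply (hU : IsOpen U) (hf : ContDiffOn ℝ (⊤ : ℕ∞) (Function.uncurry f) U)
    (hp : (x, y) ∈ U) (u : (Fin n → ℝ) × (Fin n → ℝ)) :
    HasFDerivAt (fun q => fderiv ℝ (Function.uncurry f) q u)
      ((ContinuousLinearMap.apply ℝ ℝ u).comp
        (fderiv ℝ (fderiv ℝ (Function.uncurry f)) (x, y))) (x, y) := by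
  have hd : DifferentiableAt ℝ (fderiv ℝ (Function.uncurry f)) (x, y) :=
    (((sm_fderiv hU hf).contDiffAt (hU.mem_nhds hp))).differentiableAt (by simp)
  exact (ContinuousLinearMap.apply ℝ ℝ u).hasFDerivAt.comp (x, y) hd.hasFDerivAt

theorem symm2 (hU : IsOpen U) (hf : ContDiffOn ℝ (⊤ : ℕ∞) (Function.uncurry f) U)
    (hp : (x, y) ∈ U) (u v : (Fin n → ℝ) × (Fin n → ℝ)) :
    fderiv ℝ (fderiv ℝ (Function.uncurry f)) (x, y) u v
      = fderiv ℝ (fderiv ℝ (Function.uncurry f)) (x, y) v u :=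
  ((hf.contDiffAt (hU.mem_nhds hp)).isSymmSndFDerivAt (by rw [minSmoothness_of_isRCLikeNormedField]; exact WithTop.coe_le_coe.mpr le_top)) u v

theorem pdy_pdx (hU : IsOpen U) (hf : ContDiffOn ℝ (⊤ : ℕ∞) (Function.uncurry f) U)
    (hp : (x, y) ∈ U) (α δ : Fin n) :
    pdy (pdx f α) δ x y
      = fderiv ℝ (fderiv ℝ (Function.uncurry f)) (x, y) (0, Pi.single δ 1)
          (Pi.single α 1, 0) := by
  have hev : (fun y' => pdx f α x y')
      =ᶠ[nhds y] fun y' => fderiv ℝ (Function.uncurry f) (x, y') (Pi.single α 1, 0) := by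
    have hopen : IsOpen {y' | (x, y') ∈ U} := hU.preimage (Continuous.prodMk_right x)
    filter_upwards [hopen.mem_nhds hp] with y' hy'
    exact pdx_eq hU hf hy' α
  have h1 : HasFDerivAt (fun y' : Fin n → ℝ => (x, y'))
      (ContinuousLinearMap.inr ℝ (Fin n → ℝ) (Fin n → ℝ)) y := hasFDerivAt_prodMk_right x y
  have h2 := (hasFDerivAt_fderiv_apply hU hf hp (Pi.single α 1, 0)).comp y h1
  have h3 : fderiv ℝ (fun y' => fderiv ℝ (Function.uncurry f) (x, y') (Pi.single α 1, 0)) y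
      = _ := h2.fderiv
  show fderiv ℝ (fun y' => pdx f α x y') y (Pi.single δ 1) = _
  rw [hev.fderiv_eq, h3]
  rfl

theorem pdx_pdy (hU : IsOpen U) (hf : ContDiffOn ℝ (⊤ : ℕ∞) (Function.uncurry f) U)
    (hp : (x, y) ∈ U) (α δ : Fin n) :
    pdx (pdy f δ) α x y
      = fderiv ℝ (fderiv ℝ (Function.uncurry f)) (x, y) (Pi.single α 1, 0)
          (0, Pi.single δ 1) := by
  have hev : (fun x' => pdy f δ x' y)
      =ᶠ[nhds x] fun x' => fderiv ℝ (Function.uncurry f) (x', y) (0, Pi.single δ 1) := by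
    have hopen : IsOpen {x' | (x', y) ∈ U} := hU.preimage (continuous_id.prodMk continuous_const)
    filter_upwards [hopen.mem_nhds hp] with x' hx'
    exact pdy_eq hU hf hx' δ
  have h1 : HasFDerivAt (fun x' : Fin n → ℝ => (x', y))
      (ContinuousLinearMap.inl ℝ (Fin n → ℝ) (Fin n → ℝ)) x := hasFDerivAt_prodMk_left x y
  have h2 := (hasFDerivAt_fderiv_apply hU hf hp (0, Pi.single δ 1)).comp x h1
  have h3 : fderiv ℝ (fun x' => fderiv ℝ (Function.uncurry f) (x', y) (0, Pi.single δ 1)) x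
      = _ := h2.fderiv
  show fderiv ℝ (fun x' => pdy f δ x' y) x (Pi.single α 1) = _
  rw [hev.fderiv_eq, h3]
  rfl

theorem pdy_pdx_swap (hU : IsOpen U) (hf : ContDiffOn ℝ (⊤ : ℕ∞) (Function.uncurry f) U)
    (hp : (x, y) ∈ U) (α δ : Fin n) :
    pdy (pdx f α) δ x y = pdx (pdy f δ) α x y := by
  rw [pdy_pdx hU hf hp, pdx_pdy hU hf hp, symm2 hU hf hp]

theorem pdy_pdy_gen (hU : IsOpen U) (hf : ContDiffOn ℝ (⊤ : ℕ∞) (Function.uncurry f) U)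
    (hp : (x, y) ∈ U) (γ δ : Fin n) :
    pdy (pdy f γ) δ x y
      = fderiv ℝ (fderiv ℝ (Function.uncurry f)) (x, y) (0, Pi.single δ 1)
          (0, Pi.single γ 1) := by
  have hev : (fun y' => pdy f γ x y')
      =ᶠ[nhds y] fun y' => fderiv ℝ (Function.uncurry f) (x, y') (0, Pi.single γ 1) := by
    have hopen : IsOpen {y' | (x, y') ∈ U} := hU.preimage (Continuous.prodMk_right x)
    filter_upwards [hopen.mem_nhds hp] with y' hy'
    exact pdy_eq hU hf hy' γ
  have h1 : HasFDerivAt (fun y' : Fin n → ℝ => (x, y'))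
      (ContinuousLinearMap.inr ℝ (Fin n → ℝ) (Fin n → ℝ)) y := hasFDerivAt_prodMk_right x y
  have h2 := (hasFDerivAt_fderiv_apply hU hf hp (0, Pi.single γ 1)).comp y h1
  have h3 : fderiv ℝ (fun y' => fderiv ℝ (Function.uncurry f) (x, y') (0, Pi.single γ 1)) y
      = _ := h2.fderiv
  show fderiv ℝ (fun y' => pdy f γ x y') y (Pi.single δ 1) = _
  rw [hev.fderiv_eq, h3]
  rfl

theorem pdy_pdy_swap (hU : IsOpen U) (hf : ContDiffOn ℝ (⊤ : ℕ∞) (Function.uncurry f) U)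
    (hp : (x, y) ∈ U) (γ δ : Fin n) :
    pdy (pdy f γ) δ x y = pdy (pdy f δ) γ x y := by
  rw [pdy_pdy_gen hU hf hp, pdy_pdy_gen hU hf hp, symm2 hU hf hp]

/-- Homogeneity of degree `k` in the fiber variable, on `U`. -/
def Hom (U : Set ((Fin n → ℝ) × (Fin n → ℝ))) (f : (Fin n → ℝ) → (Fin n → ℝ) → ℝ)
    (k : ℕ) : Prop :=
  ∀ ⦃x y : Fin n → ℝ⦄, (x, y) ∈ U → ∀ t : ℝ, 0 < t → f x (t • y) = t ^ k * f x y

/-- Scaling-invariance of `U` in the fiber. -/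
def ScInv (U : Set ((Fin n → ℝ) × (Fin n → ℝ))) : Prop :=
  ∀ ⦃x y : Fin n → ℝ⦄, (x, y) ∈ U → ∀ t : ℝ, 0 < t → (x, t • y) ∈ U

theorem hom_pdy (hU : IsOpen U) (hsc : ScInv U) (hf : ContDiffOn ℝ (⊤ : ℕ∞) (Function.uncurry f) U)
    {k : ℕ} (hhom : Hom U f (k + 1)) (μ : Fin n) : Hom U (pdy f μ) k := by
  intro x y hp t ht
  have hty : (x, t • y) ∈ U := hsc hp t ht
  have hd1 : DifferentiableAt ℝ (f x) (t • y) := diffAt_y hU hf hty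
  have hd2 : DifferentiableAt ℝ (f x) y := diffAt_y hU hf hp
  have hc : HasFDerivAt (fun y' : Fin n → ℝ => t • y')
      (t • ContinuousLinearMap.id ℝ (Fin n → ℝ)) y := (hasFDerivAt_id y).const_smul t
  have hφ : HasFDerivAt (fun y' => f x (t • y'))
      ((fderiv ℝ (f x) (t • y)).comp (t • ContinuousLinearMap.id ℝ (Fin n → ℝ))) y :=
    hd1.hasFDerivAt.comp y hc
  have hψ : HasFDerivAt (fun y' => t ^ (k + 1) * f x y')
      (t ^ (k + 1) • fderiv ℝ (f x) y) y := hd2.hasFDerivAt.const_mul _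
  have hev : (fun y' => f x (t • y')) =ᶠ[nhds y] fun y' => t ^ (k + 1) * f x y' := by
    have hopen : IsOpen {y' | (x, y') ∈ U} := hU.preimage (Continuous.prodMk_right x)
    filter_upwards [hopen.mem_nhds hp] with y' hy'
    exact hhom hy' t ht
  have huniq := hφ.unique (hψ.congr_of_eventuallyEq hev)
  have := congrFun (congrArg DFunLike.coe huniq) (Pi.single μ 1)
  simp only [ContinuousLinearMap.coe_comp', Function.comp_apply,
    ContinuousLinearMap.smul_apply, ContinuousLinearMap.coe_smul',
    ContinuousLinearMap.coe_id', Pi.smul_apply, id_eq, smul_eq_mul] at this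
  have h2 : t * pdy f μ x (t • y) = t ^ (k + 1) * pdy f μ x y := by
    unfold pdy
    rw [← this, map_smul, smul_eq_mul]
  have ht' : t ≠ 0 := ne_of_gt ht
  have : pdy f μ x (t • y) = t ^ k * pdy f μ x y := by
    have h3 : t * pdy f μ x (t • y) = t * (t ^ k * pdy f μ x y) := by rw [h2]; ring
    exact mul_left_cancel₀ ht' h3
  exact this

theorem hom_pdx (hU : IsOpen U) (hf : ContDiffOn ℝ (⊤ : ℕ∞) (Function.uncurry f) U)
    {k : ℕ} (hhom : Hom U f k) (μ : Fin n) : Hom U (pdx f μ) k := by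
  intro x y hp t ht
  have hev : (fun x' => f x' (t • y)) =ᶠ[nhds x] fun x' => t ^ k * f x' y := by
    have hopen : IsOpen {x' | (x', y) ∈ U} := hU.preimage (continuous_id.prodMk continuous_const)
    filter_upwards [hopen.mem_nhds hp] with x' hx'
    exact hhom hx' t ht
  show fderiv ℝ (fun x' => f x' (t • y)) x (Pi.single μ 1) = _
  rw [hev.fderiv_eq, fderiv_const_mul (diffAt_x hU hf hp)]
  rfl

theorem euler (hU : IsOpen U) (hf : ContDiffOn ℝ (⊤ : ℕ∞) (Function.uncurry f) U)
    {k : ℕ} (hhom : Hom U f k) (hp : (x, y) ∈ U) :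
    ∑ μ, y μ * pdy f μ x y = (k : ℝ) * f x y := by
  have hd : DifferentiableAt ℝ (f x) y := diffAt_y hU hf hp
  have hc : HasDerivAt (fun t : ℝ => t • y) ((1 : ℝ) • y) 1 := (hasDerivAt_id 1).smul_const y
  have h1 : HasDerivAt (fun t : ℝ => f x (t • y)) (fderiv ℝ (f x) y y) 1 := by
    have := hd.hasFDerivAt.comp_hasDerivAt_of_eq 1 hc (by simp)
    simpa [Function.comp_def] using this
  have h2 : HasDerivAt (fun t : ℝ => t ^ k * f x y) ((k : ℝ) * f x y) 1 := by
    simpa using (hasDerivAt_pow k (1 : ℝ)).mul_const (f x y)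
  have hev : (fun t : ℝ => t ^ k * f x y) =ᶠ[nhds 1] fun t : ℝ => f x (t • y) := by
    filter_upwards [eventually_gt_nhds (show (0:ℝ) < 1 by norm_num)] with t ht
    exact (hhom hp t ht).symm
  have huniq := h1.unique (h2.congr_of_eventuallyEq hev.symm)
  have hy : y = ∑ μ, y μ • (Pi.single μ 1 : Fin n → ℝ) := by
    ext j
    simp [Pi.single_apply, Finset.sum_ite_eq]
  have e1 := congrArg (fderiv ℝ (f x) y) hy
  rw [map_sum] at e1
  calc ∑ μ, y μ * pdy f μ x y = fderiv ℝ (f x) y y := by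
        rw [e1]
        exact (Finset.sum_congr rfl fun μ _ => by
          rw [(fderiv ℝ (f x) y).map_smul]; rfl)
    _ = (k : ℝ) * f x y := huniq

theorem dAt_prod {ι : Type*} {y0 : Fin n → ℝ} (u : Finset ι) (f : ι → (Fin n → ℝ) → ℝ)
    (h : ∀ i ∈ u, DifferentiableAt ℝ (f i) y0) :
    DifferentiableAt ℝ (fun y => ∏ i ∈ u, f i y) y0 := by
  classical
  induction u using Finset.induction with
  | empty => simpa using differentiableAt_const (1 : ℝ)
  | @insert a u' hx ih =>
    simp only [Finset.prod_insert hx]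
    exact (h a (Finset.mem_insert_self a u')).mul
      (ih fun i hi => h i (Finset.mem_insert_of_mem hi))

theorem dAt_det {M : (Fin n → ℝ) → Matrix (Fin n) (Fin n) ℝ} {y0 : Fin n → ℝ}
    (h : ∀ i j, DifferentiableAt ℝ (fun y => M y i j) y0) :
    DifferentiableAt ℝ (fun y => (M y).det) y0 := by
  have : (fun y => (M y).det)
      = fun y => ∑ σ : Equiv.Perm (Fin n), ((Equiv.Perm.sign σ : ℤ) : ℝ)
          * ∏ i, M y (σ i) i := by
    funext y
    rw [Matrix.det_apply]
    exact Finset.sum_congr rfl fun σ _ => by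
      simp [Units.smul_def, zsmul_eq_mul]
  rw [this]
  refine DifferentiableAt.fun_sum fun σ _ => DifferentiableAt.const_mul ?_ _
  exact dAt_prod Finset.univ (fun i y => M y (σ i) i) (fun i _ => h (σ i) i)

theorem dAt_adjugate {M : (Fin n → ℝ) → Matrix (Fin n) (Fin n) ℝ} {y0 : Fin n → ℝ}
    (h : ∀ i j, DifferentiableAt ℝ (fun y => M y i j) y0) (i j : Fin n) :
    DifferentiableAt ℝ (fun y => (M y).adjugate i j) y0 := by
  have : (fun y => (M y).adjugate i j)
      = fun y => ((M y).updateRow j (Pi.single i 1)).det := by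
    funext y; rw [Matrix.adjugate_apply]
  rw [this]
  apply dAt_det
  intro a b
  by_cases hab : a = j
  · subst hab; simp only [Matrix.updateRow_self]; exact differentiableAt_const _
  · simp only [Matrix.updateRow_ne hab]; exact h a b

theorem fderiv_coord {y0 v : Fin n → ℝ} (γ : Fin n) :
    fderiv ℝ (fun y : Fin n → ℝ => y γ) y0 v = v γ := by
  rw [show (fun y : Fin n → ℝ => y γ)
    = ⇑(ContinuousLinearMap.proj (R := ℝ) (φ := fun _ : Fin n => ℝ) γ) from rfl,
    ContinuousLinearMap.fderiv]
  rfl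

theorem diffAt_coord {y0 : Fin n → ℝ} (γ : Fin n) :
    DifferentiableAt ℝ (fun y : Fin n → ℝ => y γ) y0 :=
  (ContinuousLinearMap.proj (R := ℝ) (φ := fun _ : Fin n => ℝ) γ).differentiableAt

theorem fderiv_sum_mul {y0 v : Fin n → ℝ} {A B : Fin n → (Fin n → ℝ) → ℝ}
    (hA : ∀ β, DifferentiableAt ℝ (A β) y0) (hB : ∀ β, DifferentiableAt ℝ (B β) y0) :
    fderiv ℝ (fun y => ∑ β, A β y * B β y) y0 v
      = ∑ β, (fderiv ℝ (A β) y0 v * B β y0 + A β y0 * fderiv ℝ (B β) y0 v) := by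
  rw [fderiv_fun_sum (fun β _ => (hA β).fun_mul (hB β))]
  rw [ContinuousLinearMap.sum_apply]
  refine Finset.sum_congr rfl fun β _ => ?_
  rw [fderiv_fun_mul (hA β) (hB β)]
  simp only [ContinuousLinearMap.add_apply, ContinuousLinearMap.smul_apply, smul_eq_mul]
  ring

theorem fderiv_pi_expand (f' : (Fin n → ℝ) →L[ℝ] ℝ) (w : Fin n → ℝ) :
    f' w = ∑ β, w β * f' (Pi.single β 1) := by
  have hw : w = ∑ β, w β • (Pi.single β 1 : Fin n → ℝ) := by
    ext j
    simp [Pi.single_apply, Finset.sum_ite_eq]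
  have e1 := congrArg f' hw
  rw [map_sum] at e1
  rw [e1]
  exact Finset.sum_congr rfl fun β _ => by rw [f'.map_smul]; rfl

end FinslerAux
namespace FinslerMain
open FinslerAux

variable {n : ℕ}

/-- The slit domain. -/
def UU (Ω : Set (Fin n → ℝ)) : Set ((Fin n → ℝ) × (Fin n → ℝ)) :=
  Ω ×ˢ {y : Fin n → ℝ | y ≠ 0}

theorem UU_open {Ω : Set (Fin n → ℝ)} (hΩ : IsOpen Ω) : IsOpen (UU Ω) :=
  hΩ.prod isOpen_compl_singleton

theorem UU_sc {Ω : Set (Fin n → ℝ)} : ScInv (UU Ω) := by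
  intro x y hp t ht
  exact ⟨hp.1, smul_ne_zero (ne_of_gt ht) hp.2⟩

section WithL

variable {Ω : Set (Fin n → ℝ)} {L : (Fin n → ℝ) → (Fin n → ℝ) → ℝ}
variable (hΩ : IsOpen Ω) (hL : ContDiffOn ℝ (⊤ : ℕ∞) (Function.uncurry L) (UU Ω))
variable (hhom : Hom (UU Ω) L 2)

include hΩ hL hhom

theorem sm_pdyL (μ : Fin n) : ContDiffOn ℝ (⊤ : ℕ∞) (Function.uncurry (pdy L μ)) (UU Ω) :=
  sm_pdy (UU_open hΩ) hL μ

theorem sm_gmet (μ ν : Fin n) : ContDiffOn ℝ (⊤ : ℕ∞) (Function.uncurry (gmet L μ ν)) (UU Ω) :=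
  sm_pdy (UU_open hΩ) (sm_pdyL hΩ hL hhom ν) μ

theorem sm_pdxL (μ : Fin n) : ContDiffOn ℝ (⊤ : ℕ∞) (Function.uncurry (pdx L μ)) (UU Ω) :=
  sm_pdx (UU_open hΩ) hL μ

theorem sm_pdxPdyL (σ γ : Fin n) :
    ContDiffOn ℝ (⊤ : ℕ∞) (Function.uncurry (pdx (pdy L σ) γ)) (UU Ω) :=
  sm_pdx (UU_open hΩ) (sm_pdyL hΩ hL hhom σ) γ

theorem hom_pdyL (μ : Fin n) : Hom (UU Ω) (pdy L μ) 1 :=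
  hom_pdy (UU_open hΩ) UU_sc hL (k := 1) hhom μ

theorem hom_gmet (μ ν : Fin n) : Hom (UU Ω) (gmet L μ ν) 0 :=
  hom_pdy (UU_open hΩ) UU_sc (sm_pdyL hΩ hL hhom ν) (k := 0) (hom_pdyL hΩ hL hhom ν) μ

theorem hom_pdxL (μ : Fin n) : Hom (UU Ω) (pdx L μ) 2 :=
  hom_pdx (UU_open hΩ) hL hhom μ

variable {x y : Fin n → ℝ} (hp : (x, y) ∈ UU Ω)

include hp

theorem euler_L : ∑ μ, y μ * pdy L μ x y = 2 * L x y := by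
  have := euler (UU_open hΩ) hL hhom hp
  norm_num at this
  exact this

theorem euler_pdyL (δ : Fin n) : ∑ γ, y γ * gmet L γ δ x y = pdy L δ x y := by
  have := euler (UU_open hΩ) (sm_pdyL hΩ hL hhom δ) (hom_pdyL hΩ hL hhom δ) hp
  norm_num at this
  exact this

theorem euler_gmet (δ μ : Fin n) : ∑ γ, y γ * pdy (gmet L δ μ) γ x y = 0 := by
  have := euler (UU_open hΩ) (sm_gmet hΩ hL hhom δ μ) (hom_gmet hΩ hL hhom δ μ) hp
  norm_num at this
  exact this

theorem euler_pdxL (δ : Fin n) : ∑ γ, y γ * pdy (pdx L δ) γ x y = 2 * pdx L δ x y := by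
  have := euler (UU_open hΩ) (sm_pdxL hΩ hL hhom δ) (hom_pdxL hΩ hL hhom δ) hp
  norm_num at this
  exact this

theorem gmet_symm (δ γ : Fin n) : gmet L δ γ x y = gmet L γ δ x y :=
  pdy_pdy_swap (UU_open hΩ) hL hp γ δ


theorem mix1 (δ γ : Fin n) : pdy (pdx L δ) γ x y = pdx (pdy L γ) δ x y :=
  pdy_pdx_swap (UU_open hΩ) hL hp δ γ

theorem mix2 (γ α δ : Fin n) :
    pdy (pdx (pdy L γ) α) δ x y = pdx (gmet L δ γ) α x y :=
  pdy_pdx_swap (UU_open hΩ) (sm_pdyL hΩ hL hhom γ) hp α δ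

theorem euler_pdyL' (δ : Fin n) : ∑ γ, y γ * gmet L δ γ x y = pdy L δ x y := by
  rw [← euler_pdyL hΩ hL hhom hp δ]
  exact Finset.sum_congr rfl fun γ _ => by rw [gmet_symm hΩ hL hhom hp]

theorem pdx_A2 (δ α : Fin n) :
    ∑ γ, y γ * pdx (gmet L δ γ) α x y = pdx (pdy L δ) α x y := by
  have hev : (fun x' => ∑ γ, y γ * gmet L δ γ x' y)
      =ᶠ[nhds x] fun x' => pdy L δ x' y := by
    have hopen : IsOpen {x' | (x', y) ∈ UU Ω} :=
      (UU_open hΩ).preimage (continuous_id.prodMk continuous_const)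
    filter_upwards [hopen.mem_nhds hp] with x' hx'
    exact euler_pdyL' hΩ hL hhom hx' δ
  have h1 : fderiv ℝ (fun x' => ∑ γ, y γ * gmet L δ γ x' y) x (Pi.single α 1)
      = pdx (pdy L δ) α x y := by
    rw [hev.fderiv_eq]; rfl
  rw [← h1]
  rw [fderiv_fun_sum (u := Finset.univ)
    (A := fun γ x' => y γ * gmet L δ γ x' y)
    (fun γ _ => ((diffAt_x (UU_open hΩ) (sm_gmet hΩ hL hhom δ γ) hp).const_mul (y γ)))]
  rw [ContinuousLinearMap.sum_apply]
  refine Finset.sum_congr rfl fun γ _ => ?_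
  rw [fderiv_const_mul (diffAt_x (UU_open hΩ) (sm_gmet hΩ hL hhom δ γ) hp)]
  rfl

end WithL

end FinslerMain
namespace FinslerMain
open FinslerAux

variable {n : ℕ}

/-- The spray numerator `H_σ = y^γ ∂²L/∂x^γ∂y^σ − ∂L/∂x^σ`. -/
def Hfun (L : (Fin n → ℝ) → (Fin n → ℝ) → ℝ) (σ : Fin n) (x y : Fin n → ℝ) : ℝ :=
  (∑ γ, y γ * pdx (pdy L σ) γ x y) - pdx L σ x y

theorem spray_eq (L : (Fin n → ℝ) → (Fin n → ℝ) → ℝ)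
    (ginv : Fin n → Fin n → (Fin n → ℝ) → (Fin n → ℝ) → ℝ) (α : Fin n) (x y : Fin n → ℝ) :
    spray L ginv α x y = (1 / 2) * ∑ σ, ginv α σ x y * Hfun L σ x y := rfl

section WithGinv

variable {Ω : Set (Fin n → ℝ)} {L : (Fin n → ℝ) → (Fin n → ℝ) → ℝ}
variable {ginv : Fin n → Fin n → (Fin n → ℝ) → (Fin n → ℝ) → ℝ}
variable (hΩ : IsOpen Ω) (hL : ContDiffOn ℝ (⊤ : ℕ∞) (Function.uncurry L) (UU Ω))
variable (hhom : Hom (UU Ω) L 2)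
variable (hginv : ∀ x ∈ Ω, ∀ y : Fin n → ℝ, y ≠ 0 → ∀ μ ν : Fin n,
      (∑ σ, gmet L μ σ x y * ginv σ ν x y) = if μ = ν then (1 : ℝ) else 0)
variable {x y : Fin n → ℝ} (hp : (x, y) ∈ UU Ω)

include hginv hp

theorem g_right (μ ν : Fin n) :
    ∑ σ, gmet L μ σ x y * ginv σ ν x y = if μ = ν then (1 : ℝ) else 0 :=
  hginv x hp.1 y hp.2 μ ν

theorem mat_right :
    (Matrix.of fun μ ν => gmet L μ ν x y) * (Matrix.of fun μ ν => ginv μ ν x y) = 1 := by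
  ext μ ν
  rw [Matrix.mul_apply]
  simpa [Matrix.one_apply] using g_right hginv hp μ ν

theorem g_left (ν β : Fin n) :
    ∑ δ, ginv ν δ x y * gmet L δ β x y = if ν = β then (1 : ℝ) else 0 := by
  have h := mul_eq_one_comm.mp (mat_right hginv hp)
  have h2 : ((Matrix.of fun μ ν => ginv μ ν x y) * Matrix.of fun μ ν => gmet L μ ν x y) ν β
      = (1 : Matrix (Fin n) (Fin n) ℝ) ν β := by rw [h]
  rw [Matrix.mul_apply] at h2
  simpa [Matrix.one_apply] using h2

include hΩ hL hhom

theorem dginv (σ ν : Fin n) : DifferentiableAt ℝ (fun y' => ginv σ ν x y') y := by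
  classical
  set M : (Fin n → ℝ) → Matrix (Fin n) (Fin n) ℝ :=
    fun y' => Matrix.of fun μ ν => gmet L μ ν x y' with hM
  have hMd : ∀ i j, DifferentiableAt ℝ (fun y' => M y' i j) y :=
    fun i j => diffAt_y (UU_open hΩ) (sm_gmet hΩ hL hhom i j) hp
  have hdet : DifferentiableAt ℝ (fun y' => (M y').det) y := dAt_det hMd
  have hdetne : (M y).det ≠ 0 := by
    have hinv := invertibleOfRightInverse _ _ (mat_right hginv hp)
    exact (Matrix.isUnit_det_of_invertible (M y)).ne_zero
  have hev : (fun y' => ginv σ ν x y')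
      =ᶠ[nhds y] fun y' => ((M y').det)⁻¹ * (M y').adjugate σ ν := by
    have hopen : IsOpen {y' | (x, y') ∈ UU Ω} :=
      (UU_open hΩ).preimage (Continuous.prodMk_right x)
    filter_upwards [hopen.mem_nhds hp] with y' hy'
    have h1 : (M y')⁻¹ = Matrix.of fun μ ν => ginv μ ν x y' :=
      Matrix.inv_eq_right_inv (mat_right hginv hy')
    have h2 : ginv σ ν x y' = (M y')⁻¹ σ ν := by rw [h1]; rfl
    rw [h2, Matrix.inv_def, Matrix.smul_apply, Ring.inverse_eq_inv', smul_eq_mul]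
  exact ((hdet.inv hdetne).mul (dAt_adjugate hMd σ ν)).congr_of_eventuallyEq hev

omit hginv in
theorem dH (σ : Fin n) : DifferentiableAt ℝ (fun y' => Hfun L σ x y') y := by
  refine DifferentiableAt.sub ?_ (diffAt_y (UU_open hΩ) (sm_pdxL hΩ hL hhom σ) hp)
  exact DifferentiableAt.fun_sum fun γ _ =>
    (diffAt_coord γ).mul (diffAt_y (UU_open hΩ) (sm_pdxPdyL hΩ hL hhom σ γ) hp)

theorem dspray (α : Fin n) : DifferentiableAt ℝ (fun y' => spray L ginv α x y') y := by
  have : (fun y' => spray L ginv α x y')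
      = fun y' => (1 / 2) * ∑ σ, ginv α σ x y' * Hfun L σ x y' := rfl
  rw [this]
  exact (DifferentiableAt.fun_sum fun σ _ =>
    (dginv hΩ hL hhom hginv hp α σ).mul (dH hΩ hL hhom hp σ)).const_mul _

end WithGinv

end FinslerMain
namespace FinslerMain
open FinslerAux

variable {n : ℕ}
variable {Ω : Set (Fin n → ℝ)} {L : (Fin n → ℝ) → (Fin n → ℝ) → ℝ}
variable {ginv : Fin n → Fin n → (Fin n → ℝ) → (Fin n → ℝ) → ℝ}
variable (hΩ : IsOpen Ω) (hL : ContDiffOn ℝ (⊤ : ℕ∞) (Function.uncurry L) (UU Ω))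
variable (hhom : Hom (UU Ω) L 2)
variable (hginv : ∀ x ∈ Ω, ∀ y : Fin n → ℝ, y ≠ 0 → ∀ μ ν : Fin n,
      (∑ σ, gmet L μ σ x y * ginv σ ν x y) = if μ = ν then (1 : ℝ) else 0)
variable {x y : Fin n → ℝ} (hp : (x, y) ∈ UU Ω)

include hΩ hL hhom hginv hp

theorem key_contr (σ : Fin n) : ∑ β, pdy L β x y * ginv β σ x y = y σ := by
  have e1 : ∀ β, pdy L β x y = ∑ γ, y γ * gmet L γ β x y :=
    fun β => (euler_pdyL hΩ hL hhom hp β).symm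
  calc ∑ β, pdy L β x y * ginv β σ x y
      = ∑ β, ∑ γ, (y γ * gmet L γ β x y) * ginv β σ x y := by
        refine Finset.sum_congr rfl fun β _ => ?_
        rw [e1 β, Finset.sum_mul]
    _ = ∑ γ, y γ * ∑ β, gmet L γ β x y * ginv β σ x y := by
        rw [Finset.sum_comm]
        refine Finset.sum_congr rfl fun γ _ => ?_
        rw [Finset.mul_sum]
        exact Finset.sum_congr rfl fun β _ => by ring
    _ = y σ := by
        simp only [g_right hginv hp]
        simp [mul_ite, Finset.sum_ite_eq']

theorem phi_eq :
    ∑ β, pdy L β x y * spray L ginv β x y = (1 / 2) * ∑ γ, y γ * Hfun L γ x y := by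
  calc ∑ β, pdy L β x y * spray L ginv β x y
      = ∑ β, ∑ σ, (pdy L β x y * ginv β σ x y) * ((1 / 2) * Hfun L σ x y) := by
        refine Finset.sum_congr rfl fun β _ => ?_
        rw [spray_eq, Finset.mul_sum, Finset.mul_sum]
        exact Finset.sum_congr rfl fun σ _ => by ring
    _ = ∑ σ, (∑ β, pdy L β x y * ginv β σ x y) * ((1 / 2) * Hfun L σ x y) := by
        rw [Finset.sum_comm]
        exact Finset.sum_congr rfl fun σ _ => by rw [Finset.sum_mul]
    _ = ∑ σ, y σ * ((1 / 2) * Hfun L σ x y) := by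
        refine Finset.sum_congr rfl fun σ _ => ?_
        rw [key_contr hΩ hL hhom hginv hp σ]
    _ = (1 / 2) * ∑ γ, y γ * Hfun L γ x y := by
        rw [Finset.mul_sum]
        exact Finset.sum_congr rfl fun γ _ => by ring

theorem gspray (δ : Fin n) :
    ∑ β, gmet L δ β x y * spray L ginv β x y = (1 / 2) * Hfun L δ x y := by
  calc ∑ β, gmet L δ β x y * spray L ginv β x y
      = ∑ β, ∑ σ, (gmet L δ β x y * ginv β σ x y) * ((1 / 2) * Hfun L σ x y) := by
        refine Finset.sum_congr rfl fun β _ => ?_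
        rw [spray_eq, Finset.mul_sum, Finset.mul_sum]
        exact Finset.sum_congr rfl fun σ _ => by ring
    _ = ∑ σ, (∑ β, gmet L δ β x y * ginv β σ x y) * ((1 / 2) * Hfun L σ x y) := by
        rw [Finset.sum_comm]
        exact Finset.sum_congr rfl fun σ _ => by rw [Finset.sum_mul]
    _ = (1 / 2) * Hfun L δ x y := by
        simp only [g_right hginv hp]
        simp [ite_mul, Finset.sum_ite_eq]

omit hginv in
theorem pdyH (γ δ : Fin n) :
    pdy (Hfun L γ) δ x y
      = pdx (pdy L γ) δ x y + (∑ α, y α * pdy (pdx (pdy L γ) α) δ x y)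
        - pdy (pdx L γ) δ x y := by
  have hA : ∀ α : Fin n, DifferentiableAt ℝ (fun y' : Fin n → ℝ => y' α) y :=
    fun α => diffAt_coord α
  have hB : ∀ α, DifferentiableAt ℝ (fun y' => pdx (pdy L γ) α x y') y :=
    fun α => diffAt_y (UU_open hΩ) (sm_pdxPdyL hΩ hL hhom γ α) hp
  have h1 : DifferentiableAt ℝ (fun y' => ∑ α, y' α * pdx (pdy L γ) α x y') y :=
    DifferentiableAt.fun_sum fun α _ => (hA α).mul (hB α)
  have h2 : DifferentiableAt ℝ (fun y' => pdx L γ x y') y :=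
    diffAt_y (UU_open hΩ) (sm_pdxL hΩ hL hhom γ) hp
  show fderiv ℝ (fun y' => (∑ α, y' α * pdx (pdy L γ) α x y') - pdx L γ x y') y
      (Pi.single δ 1) = _
  rw [fderiv_fun_sub h1 h2, ContinuousLinearMap.sub_apply, fderiv_sum_mul hA hB]
  congr 1
  rw [Finset.sum_add_distrib]
  congr 1
  have hc : ∀ α : Fin n,
      fderiv ℝ (fun y' : Fin n → ℝ => y' α) y (Pi.single δ 1) * pdx (pdy L γ) α x y
        = (if α = δ then (1:ℝ) else 0) * pdx (pdy L γ) α x y := fun α => by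
    rw [fderiv_coord]
    simp [Pi.single_apply]
  rw [Finset.sum_congr rfl fun α _ => hc α]
  simp [ite_mul, Finset.sum_ite_eq']

theorem sprayContr (δ : Fin n) :
    ∑ β, pdy L β x y * nlc L ginv β δ x y = pdx L δ x y := by
  have hopen : IsOpen {y' | (x, y') ∈ UU Ω} :=
    (UU_open hΩ).preimage (Continuous.prodMk_right x)
  have hev : (fun y' => ∑ β, pdy L β x y' * spray L ginv β x y')
      =ᶠ[nhds y] fun y' => (1 / 2) * ∑ γ, y' γ * Hfun L γ x y' := by
    filter_upwards [hopen.mem_nhds hp] with y' hy'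
    exact phi_eq hΩ hL hhom hginv hy'
  have dLR := hev.fderiv_eq (𝕜 := ℝ)
  have hAl : ∀ β, DifferentiableAt ℝ (fun y' => pdy L β x y') y :=
    fun β => diffAt_y (UU_open hΩ) (sm_pdyL hΩ hL hhom β) hp
  have hBl : ∀ β, DifferentiableAt ℝ (fun y' => spray L ginv β x y') y :=
    fun β => dspray hΩ hL hhom hginv hp β
  have hH : ∀ γ, DifferentiableAt ℝ (fun y' => Hfun L γ x y') y :=
    fun γ => dH hΩ hL hhom hp γ
  have lhs : fderiv ℝ (fun y' => ∑ β, pdy L β x y' * spray L ginv β x y') y (Pi.single δ 1)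
      = ∑ β, (gmet L δ β x y * spray L ginv β x y
          + pdy L β x y * nlc L ginv β δ x y) := by
    rw [fderiv_sum_mul hAl hBl]
    exact Finset.sum_congr rfl fun β _ => rfl
  have rhs : fderiv ℝ (fun y' => (1 / 2) * ∑ γ, y' γ * Hfun L γ x y') y (Pi.single δ 1)
      = (1 / 2) * (Hfun L δ x y + ∑ γ, y γ * pdy (Hfun L γ) δ x y) := by
    rw [fderiv_const_mul (DifferentiableAt.fun_sum fun γ _ => (diffAt_coord γ).fun_mul (hH γ))]
    rw [ContinuousLinearMap.smul_apply, smul_eq_mul]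
    rw [fderiv_sum_mul (fun γ => diffAt_coord γ) hH]
    congr 1
    rw [Finset.sum_add_distrib]
    congr 1
    have hc : ∀ γ : Fin n,
        fderiv ℝ (fun y' : Fin n → ℝ => y' γ) y (Pi.single δ 1) * Hfun L γ x y
          = (if γ = δ then (1:ℝ) else 0) * Hfun L γ x y := fun γ => by
      rw [fderiv_coord]
      simp [Pi.single_apply]
    rw [Finset.sum_congr rfl fun γ _ => hc γ]
    simp [ite_mul, Finset.sum_ite_eq']
  have heq : ∑ β, (gmet L δ β x y * spray L ginv β x y
      + pdy L β x y * nlc L ginv β δ x y)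
      = (1 / 2) * (Hfun L δ x y + ∑ γ, y γ * pdy (Hfun L γ) δ x y) := by
    rw [← lhs, dLR, rhs]
  rw [Finset.sum_add_distrib, gspray hΩ hL hhom hginv hp δ] at heq
  have hfinal : ∑ γ, y γ * pdy (Hfun L γ) δ x y = 2 * pdx L δ x y := by
    have step : ∑ γ, y γ * pdy (Hfun L γ) δ x y
        = (∑ γ, y γ * pdx (pdy L γ) δ x y)
          + (∑ γ, y γ * ∑ α, y α * pdy (pdx (pdy L γ) α) δ x y)
          - ∑ γ, y γ * pdy (pdx L γ) δ x y := by
      rw [← Finset.sum_add_distrib, ← Finset.sum_sub_distrib]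
      refine Finset.sum_congr rfl fun γ _ => ?_
      rw [pdyH hΩ hL hhom hp γ δ]
      ring
    rw [step]
    have t1 : ∑ γ, y γ * pdx (pdy L γ) δ x y = 2 * pdx L δ x y := by
      rw [Finset.sum_congr rfl fun γ _ => by
        rw [← mix1 hΩ hL hhom hp δ γ]]
      exact euler_pdxL hΩ hL hhom hp δ
    have t2 : ∑ γ, y γ * ∑ α, y α * pdy (pdx (pdy L γ) α) δ x y
        = ∑ α, y α * pdx (pdy L δ) α x y := by
      calc ∑ γ, y γ * ∑ α, y α * pdy (pdx (pdy L γ) α) δ x y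
          = ∑ γ, ∑ α, y α * (y γ * pdx (gmet L δ γ) α x y) := by
            refine Finset.sum_congr rfl fun γ _ => ?_
            rw [Finset.mul_sum]
            refine Finset.sum_congr rfl fun α _ => ?_
            rw [mix2 hΩ hL hhom hp γ α δ]
            ring
        _ = ∑ α, y α * ∑ γ, y γ * pdx (gmet L δ γ) α x y := by
            rw [Finset.sum_comm]
            exact Finset.sum_congr rfl fun α _ => by rw [Finset.mul_sum]
        _ = ∑ α, y α * pdx (pdy L δ) α x y := by
            refine Finset.sum_congr rfl fun α _ => ?_
            rw [pdx_A2 hΩ hL hhom hp δ α]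
    have t3 : ∑ γ, y γ * pdy (pdx L γ) δ x y = ∑ γ, y γ * pdx (pdy L δ) γ x y := by
      refine Finset.sum_congr rfl fun γ _ => ?_
      rw [mix1 hΩ hL hhom hp γ δ]
    rw [t1, t2, t3]
    ring
  rw [hfinal] at heq
  linarith

end FinslerMain
namespace FinslerMain
open FinslerAux

variable {n : ℕ}
variable {Ω : Set (Fin n → ℝ)} {L : (Fin n → ℝ) → (Fin n → ℝ) → ℝ}
variable {s : (Fin n → ℝ) → (Fin n → ℝ)}
variable (hΩ : IsOpen Ω) (hL : ContDiffOn ℝ (⊤ : ℕ∞) (Function.uncurry L) (UU Ω))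
variable (hhom : Hom (UU Ω) L 2)
variable (hs : ContDiffOn ℝ (⊤ : ℕ∞) s Ω) (hs0 : ∀ x ∈ Ω, s x ≠ 0)
variable (hnorm : ∀ x ∈ Ω, (∑ μ, ∑ ν, gmet L μ ν x (s x) * s x μ * s x ν) = -1)
variable {x : Fin n → ℝ} (hx : x ∈ Ω)

include hΩ hL hhom hs hs0 hnorm hx

theorem L_const : L x (s x) = -(1 / 2) := by
  have hp : (x, s x) ∈ UU Ω := ⟨hx, hs0 x hx⟩
  have e1 : ∑ μ, ∑ ν, gmet L μ ν x (s x) * s x μ * s x ν = 2 * L x (s x) := by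
    calc ∑ μ, ∑ ν, gmet L μ ν x (s x) * s x μ * s x ν
        = ∑ ν, ∑ μ, s x μ * gmet L μ ν x (s x) * s x ν := by
          rw [Finset.sum_comm]
          exact Finset.sum_congr rfl fun ν _ => Finset.sum_congr rfl fun μ _ => by ring
      _ = ∑ ν, (∑ μ, s x μ * gmet L μ ν x (s x)) * s x ν := by
          exact Finset.sum_congr rfl fun ν _ => by rw [Finset.sum_mul]
      _ = ∑ ν, s x ν * pdy L ν x (s x) := by
          refine Finset.sum_congr rfl fun ν _ => ?_
          rw [euler_pdyL hΩ hL hhom hp ν]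
          ring
      _ = 2 * L x (s x) := euler_L hΩ hL hhom hp
  have := hnorm x hx
  rw [e1] at this
  linarith

theorem chain_eq (δ : Fin n) :
    pdx L δ x (s x) + ∑ β, pdy L β x (s x) * pd (fun x' => s x' β) δ x = 0 := by
  have hp : (x, s x) ∈ UU Ω := ⟨hx, hs0 x hx⟩
  have hds : DifferentiableAt ℝ s x := (hs.contDiffAt (hΩ.mem_nhds hx)).differentiableAt (by simp)
  have hF : DifferentiableAt ℝ (Function.uncurry L) (x, s x) := diffAt_unc (UU_open hΩ) hL hp
  have hcomp : HasFDerivAt (fun x' => L x' (s x'))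
      ((fderiv ℝ (Function.uncurry L) (x, s x)).comp
        ((ContinuousLinearMap.id ℝ (Fin n → ℝ)).prod (fderiv ℝ s x))) x :=
    by have h := hF.hasFDerivAt.comp x ((hasFDerivAt_id x).prodMk hds.hasFDerivAt); exact h
  have hconst : fderiv ℝ (fun x' => L x' (s x')) x = 0 := by
    have hev : (fun x' => L x' (s x')) =ᶠ[nhds x] fun _ => (-(1 / 2) : ℝ) := by
      filter_upwards [hΩ.mem_nhds hx] with x' hx'
      exact L_const hΩ hL hhom hs hs0 hnorm hx'
    rw [hev.fderiv_eq (𝕜 := ℝ), fderiv_const_apply]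
  have h0 : (fderiv ℝ (Function.uncurry L) (x, s x))
      (Pi.single δ 1, fderiv ℝ s x (Pi.single δ 1)) = 0 := by
    have := hcomp.fderiv.symm.trans hconst
    have h1 := congrFun (congrArg DFunLike.coe this) (Pi.single δ 1)
    simpa using h1
  set w : Fin n → ℝ := fderiv ℝ s x (Pi.single δ 1) with hw
  have hsplit : ((Pi.single δ 1 : Fin n → ℝ), w)
      = ((Pi.single δ 1 : Fin n → ℝ), (0 : Fin n → ℝ)) + ((0 : Fin n → ℝ), w) := by
    simp
  rw [hsplit, map_add] at h0
  have e1 : fderiv ℝ (Function.uncurry L) (x, s x) ((Pi.single δ 1 : Fin n → ℝ), 0)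
      = pdx L δ x (s x) := (pdx_eq (UU_open hΩ) hL hp δ).symm
  have e2 : fderiv ℝ (Function.uncurry L) (x, s x) ((0 : Fin n → ℝ), w)
      = ∑ β, w β * pdy L β x (s x) := by
    rw [← pdy_eq_gen (UU_open hΩ) hL hp w]
    exact fderiv_pi_expand _ w
  have e3 : ∀ β, w β = pd (fun x' => s x' β) δ x := by
    intro β
    have hproj : fderiv ℝ (fun x' => s x' β) x
        = ((ContinuousLinearMap.proj (R := ℝ) (φ := fun _ : Fin n => ℝ) β).comp
            (fderiv ℝ s x)) :=
      ((ContinuousLinearMap.proj (R := ℝ) (φ := fun _ : Fin n => ℝ) β).hasFDerivAt.comp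
        x hds.hasFDerivAt).fderiv
    show w β = fderiv ℝ (fun x' => s x' β) x (Pi.single δ 1)
    rw [hproj]
    rfl
  rw [e1, e2] at h0
  rw [← h0]
  congr 1
  exact Finset.sum_congr rfl fun β _ => by rw [e3 β]; ring

end FinslerMain
/-- A normalized section (`g_s(s,s) = −1`) satisfying the support-evaluated
Killing equation is geodesic: `s^α D_α s^β = 0`. -/
theorem normalized_killing_is_geodesic
    {n : ℕ} (hn : 2 ≤ n) (Ω : Set (Fin n → ℝ)) (hΩopen : IsOpen Ω) (hΩconn : IsConnected Ω)
    (L : (Fin n → ℝ) → (Fin n → ℝ) → ℝ)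
    (hL : ContDiffOn ℝ (⊤ : ℕ∞) (fun p : (Fin n → ℝ) × (Fin n → ℝ) => L p.1 p.2)
      (Ω ×ˢ {y : Fin n → ℝ | y ≠ 0}))
    (hhom : ∀ x ∈ Ω, ∀ y : Fin n → ℝ, y ≠ 0 → ∀ t : ℝ, 0 < t → L x (t • y) = t ^ 2 * L x y)
    (ginv : Fin n → Fin n → (Fin n → ℝ) → (Fin n → ℝ) → ℝ)
    (hginv : ∀ x ∈ Ω, ∀ y : Fin n → ℝ, y ≠ 0 → ∀ μ ν : Fin n,
      (∑ σ, gmet L μ σ x y * ginv σ ν x y) = if μ = ν then (1 : ℝ) else 0)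
    (s : (Fin n → ℝ) → (Fin n → ℝ)) (hs : ContDiffOn ℝ (⊤ : ℕ∞) s Ω) (hs0 : ∀ x ∈ Ω, s x ≠ 0)
    (hkill : ∀ x ∈ Ω, ∀ γ δ : Fin n,
      (∑ β, gmet L δ β x (s x) * Dsec L ginv s γ β x)
        + (∑ β, gmet L γ β x (s x) * Dsec L ginv s δ β x)
        + 2 * (∑ μ, (∑ α, s x α * Dsec L ginv s α μ x) * cartan L γ δ μ x (s x)) = 0)
    (hnorm : ∀ x ∈ Ω, (∑ μ, ∑ ν, gmet L μ ν x (s x) * s x μ * s x ν) = -1) :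
    ∀ x ∈ Ω, ∀ β : Fin n, (∑ α, s x α * Dsec L ginv s α β x) = 0 := by
  classical
  intro x hx β
  have hUo : IsOpen (FinslerMain.UU Ω) := FinslerMain.UU_open hΩopen
  have hL' : ContDiffOn ℝ (⊤ : ℕ∞) (Function.uncurry L) (FinslerMain.UU Ω) := hL
  have hhom' : FinslerAux.Hom (FinslerMain.UU Ω) L 2 := by
    intro a b hq t ht
    exact hhom a hq.1 b hq.2 t ht
  have hp : (x, s x) ∈ FinslerMain.UU Ω := ⟨hx, hs0 x hx⟩
  set V : Fin n → ℝ := fun μ => ∑ α, s x α * Dsec L ginv s α μ x with hV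
  have key1 : ∀ δ, ∑ b, gmet L δ b x (s x) * V b = 0 := by
    intro δ
    have hsum : ∑ γ, s x γ *
        ((∑ b, gmet L δ b x (s x) * Dsec L ginv s γ b x)
          + (∑ b, gmet L γ b x (s x) * Dsec L ginv s δ b x)
          + 2 * (∑ μ, (∑ α, s x α * Dsec L ginv s α μ x) * cartan L γ δ μ x (s x))) = 0 := by
      refine Finset.sum_eq_zero fun γ _ => ?_
      rw [hkill x hx γ δ, mul_zero]
    have expand : ∀ γ : Fin n, s x γ *
        ((∑ b, gmet L δ b x (s x) * Dsec L ginv s γ b x)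
          + (∑ b, gmet L γ b x (s x) * Dsec L ginv s δ b x)
          + 2 * (∑ μ, (∑ α, s x α * Dsec L ginv s α μ x) * cartan L γ δ μ x (s x)))
        = (∑ b, gmet L δ b x (s x) * (s x γ * Dsec L ginv s γ b x))
          + (∑ b, (s x γ * gmet L γ b x (s x)) * Dsec L ginv s δ b x)
          + 2 * (∑ μ, V μ * (s x γ * cartan L γ δ μ x (s x))) := by
      intro γ
      rw [mul_add, mul_add, Finset.mul_sum, Finset.mul_sum]
      congr 1
      · congr 1
        · exact Finset.sum_congr rfl fun b _ => by ring
        · exact Finset.sum_congr rfl fun b _ => by ring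
      · rw [mul_left_comm, Finset.mul_sum]
        congr 1
        refine Finset.sum_congr rfl fun μ _ => ?_
        simp only [hV]
        ring
    rw [Finset.sum_congr rfl fun γ _ => expand γ] at hsum
    rw [Finset.sum_add_distrib, Finset.sum_add_distrib] at hsum
    -- first piece: ∑_γ ∑_b g δ b (s γ D γ b) = ∑_b g δ b V b
    have T1 : ∑ γ, ∑ b, gmet L δ b x (s x) * (s x γ * Dsec L ginv s γ b x)
        = ∑ b, gmet L δ b x (s x) * V b := by
      rw [Finset.sum_comm]
      refine Finset.sum_congr rfl fun b _ => ?_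
      rw [hV, Finset.mul_sum]
    -- second piece vanishes
    have T2 : ∑ γ, ∑ b, (s x γ * gmet L γ b x (s x)) * Dsec L ginv s δ b x = 0 := by
      have h1 : ∑ γ, ∑ b, (s x γ * gmet L γ b x (s x)) * Dsec L ginv s δ b x
          = ∑ b, pdy L b x (s x) * Dsec L ginv s δ b x := by
        rw [Finset.sum_comm]
        refine Finset.sum_congr rfl fun b _ => ?_
        rw [← Finset.sum_mul, FinslerMain.euler_pdyL hΩopen hL' hhom' hp b]
      rw [h1]
      have h2 : ∑ b, pdy L b x (s x) * Dsec L ginv s δ b x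
          = (∑ b, pdy L b x (s x) * pd (fun x' => s x' b) δ x)
            + ∑ b, pdy L b x (s x) * nlc L ginv b δ x (s x) := by
        rw [← Finset.sum_add_distrib]
        refine Finset.sum_congr rfl fun b _ => ?_
        show pdy L b x (s x) * (pd (fun x' => s x' b) δ x + nlc L ginv b δ x (s x)) = _
        ring
      rw [h2, FinslerMain.sprayContr hΩopen hL' hhom' hginv hp δ]
      have h3 := FinslerMain.chain_eq hΩopen hL' hhom' hs hs0 hnorm hx δ
      linarith
    -- third piece vanishes
    have T3 : ∑ γ, 2 * (∑ μ, V μ * (s x γ * cartan L γ δ μ x (s x))) = 0 := by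
      have h1 : ∑ γ, 2 * (∑ μ, V μ * (s x γ * cartan L γ δ μ x (s x)))
          = 2 * ∑ μ, V μ * (∑ γ, s x γ * cartan L γ δ μ x (s x)) := by
        rw [← Finset.mul_sum, Finset.sum_comm]
        congr 1
        refine Finset.sum_congr rfl fun μ _ => ?_
        rw [Finset.mul_sum]
      rw [h1]
      have h2 : ∀ μ, ∑ γ, s x γ * cartan L γ δ μ x (s x) = 0 := by
        intro μ
        have h3 : ∑ γ, s x γ * cartan L γ δ μ x (s x)
            = (1 / 2) * ∑ γ, s x γ * pdy (gmet L δ μ) γ x (s x) := by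
          rw [Finset.mul_sum]
          refine Finset.sum_congr rfl fun γ _ => ?_
          show s x γ * ((1 / 2) * pdy (gmet L δ μ) γ x (s x)) = _
          ring
        rw [h3, FinslerMain.euler_gmet hΩopen hL' hhom' hp δ μ, mul_zero]
      rw [Finset.sum_congr rfl fun μ _ => by rw [h2 μ, mul_zero]]
      simp
    rw [T1, T2, T3] at hsum
    simpa using hsum
  -- invert the metric
  have key2 : ∀ b, (∑ δ, ginv β δ x (s x) * gmet L δ b x (s x))
      = if β = b then (1 : ℝ) else 0 :=
    FinslerMain.g_left hginv hp β
  calc ∑ α, s x α * Dsec L ginv s α β x = V β := rfl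
    _ = ∑ b, (if β = b then (1 : ℝ) else 0) * V b := by
        simp [ite_mul, Finset.sum_ite_eq]
    _ = ∑ b, (∑ δ, ginv β δ x (s x) * gmet L δ b x (s x)) * V b := by
        exact Finset.sum_congr rfl fun b _ => by rw [key2 b]
    _ = ∑ b, ∑ δ, ginv β δ x (s x) * gmet L δ b x (s x) * V b := by
        exact Finset.sum_congr rfl fun b _ => Finset.sum_mul _ _ _
    _ = ∑ δ, ∑ b, ginv β δ x (s x) * gmet L δ b x (s x) * V b := Finset.sum_comm
    _ = ∑ δ, ginv β δ x (s x) * ∑ b, gmet L δ b x (s x) * V b := by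
        refine Finset.sum_congr rfl fun δ _ => ?_
        rw [Finset.mul_sum]
        exact Finset.sum_congr rfl fun b _ => by ring
    _ = 0 := by
        rw [Finset.sum_congr rfl fun δ _ => by rw [key1 δ, mul_zero]]
        simp
end
end
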